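/- arXiv:2511.14496 — 5 statements merged into one kernel-verified Lean document; each statement's English description precedes it below -/
import Mathlib

section
/- Let G be a finite group and let H be a normal subgroup of G. Then the graph Γ_H(G) is integral, i.e., every eigenvalue of the adjacency matrix of Γ_H(G) (viewed as a complex matrix) is an integer. -/
open Finset Polynomial Module
open scoped Classical

noncomputable section

/-- The connection set `S_H = {(g,1), (1,g), (g,g) : g ∈ G \ H}`. -/
def SH (G : Type*) [Group G] (H : Subgroup G) : Set (G × G) :=
  {p | (∃ g ∉ H, p = (g, 1)) ∨ (∃ g ∉ H, p = (1, g)) ∨ (∃ g ∉ H, p = (g, g))}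

lemma SH_inv {G : Type*} [Group G] (H : Subgroup G) {p : G × G} (hp : p ∈ SH G H) :
    p⁻¹ ∈ SH G H := by
  rcases hp with ⟨g, hg, rfl⟩ | ⟨g, hg, rfl⟩ | ⟨g, hg, rfl⟩
  · exact Or.inl ⟨g⁻¹, fun h => hg (by simpa using H.inv_mem h), by simp [Prod.ext_iff]⟩
  · exact Or.inr (Or.inl ⟨g⁻¹, fun h => hg (by simpa using H.inv_mem h), by simp [Prod.ext_iff]⟩)
  · exact Or.inr (Or.inr ⟨g⁻¹, fun h => hg (by simpa using H.inv_mem h), by simp [Prod.ext_iff]⟩)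

/-- The Cayley graph `Γ_H(G) = Cay(G × G, S_H)`:
distinct `u, v` are adjacent iff `u * v⁻¹ ∈ S_H`. -/
def Gamma (G : Type*) [Group G] (H : Subgroup G) : SimpleGraph (G × G) where
  Adj u v := u ≠ v ∧ u * v⁻¹ ∈ SH G H
  symm := by
    constructor
    rintro u v ⟨hne, hS⟩
    refine ⟨hne.symm, ?_⟩
    have h : v * u⁻¹ = (u * v⁻¹)⁻¹ := by simp [mul_inv_rev]
    rw [h]
    exact SH_inv H hS
  loopless := ⟨fun u h => h.1 rfl⟩

set_option linter.unusedSectionVars false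

namespace GammaInt

/-! ### Indicator functions -/

/-- Indicator with a fixed (classical) decidability instance. -/
def ind (p : Prop) : ℂ := if p then 1 else 0

lemma ind_eq_ite (p : Prop) [Decidable p] : ind p = if p then 1 else 0 := by
  by_cases h : p <;> simp [ind, h]

@[simp] lemma ind_of {p : Prop} (h : p) : ind p = 1 := if_pos h
@[simp] lemma ind_of_not {p : Prop} (h : ¬ p) : ind p = 0 := if_neg h
@[simp] lemma ind_true : ind True = 1 := if_pos trivial
@[simp] lemma ind_false : ind False = 0 := if_neg id

lemma ind_congr {p q : Prop} (h : p ↔ q) : ind p = ind q := by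
  by_cases hp : p
  · rw [ind_of hp, ind_of (h.mp hp)]
  · rw [ind_of_not hp, ind_of_not fun hq => hp (h.mpr hq)]

lemma ind_mul_ind (p q : Prop) : ind p * ind q = ind (p ∧ q) := by
  by_cases hp : p <;> by_cases hq : q <;> simp [hp, hq]

lemma sum_ind_point {β : Type*} [Fintype β] {p : β → Prop} (c : β) (hp : ∀ s, p s → s = c) :
    ∑ s, ind (p s) = ind (p c) := by
  by_cases h : p c
  · rw [ind_of h, Finset.sum_eq_single c]
    · rw [ind_of h]
    · intro s _ hs; rw [ind_of_not fun hps => hs (hp s hps)]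
    · intro hc; exact absurd (Finset.mem_univ c) hc
  · rw [ind_of_not h]
    exact Finset.sum_eq_zero fun s _ => ind_of_not fun hps => h (hp s hps ▸ hps)

/-! ### Convolution and circulant matrices on a finite group -/

variable {α : Type*} [Group α] [Fintype α]

/-- Convolution of functions on a finite group. -/
def cv (f g : α → ℂ) : α → ℂ := fun z => ∑ s, f s * g (s⁻¹ * z)

/-- The group-circulant matrix of a function. -/
def TM (f : α → ℂ) : Matrix α α ℂ := Matrix.of fun u v => f (u * v⁻¹)

lemma TM_apply (f : α → ℂ) (u v : α) : TM f u v = f (u * v⁻¹) := rfl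

lemma TM_mul (f g : α → ℂ) : TM f * TM g = TM (cv f g) := by
  ext u v
  rw [Matrix.mul_apply]
  show ∑ w, f (u * w⁻¹) * g (w * v⁻¹) = ∑ s, f s * g (s⁻¹ * (u * v⁻¹))
  refine Fintype.sum_equiv ((Equiv.inv α).trans (Equiv.mulLeft u)) _ _ fun w => ?_
  simp only [Equiv.trans_apply, Equiv.inv_apply, Equiv.coe_mulLeft]
  congr 1
  congr 1
  group

lemma TM_smul (c : ℂ) (f : α → ℂ) : TM (c • f) = c • TM f := by ext u v; simp [TM]

lemma TM_comm {f g : α → ℂ} (h : cv f g = cv g f) : TM f * TM g = TM g * TM f := by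
  rw [TM_mul, TM_mul, h]

/-! ### Basic functions on a finite group -/

def c1 : α → ℂ := fun _ => 1
def dl : α → ℂ := fun z => ind (z = 1)
def eH (H : Subgroup α) : α → ℂ := fun z => ind (z ∈ H)

/-- The number of elements of `H`, as a `Finset` cardinality. -/
def hc (H : Subgroup α) : ℕ := (Finset.univ.filter (· ∈ H)).card

lemma inv_mul_eq_iff' {a b s : α} : s⁻¹ * a = b ↔ s = a * b⁻¹ := by
  constructor
  · rintro rfl; group
  · rintro rfl; group

lemma sum_point_fun (f : α → ℂ) {p : α → Prop} (c : α) (hp : ∀ s, p s → s = c) :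
    ∑ s, ind (p s) * f s = ind (p c) * f c := by
  by_cases h : p c
  · rw [ind_of h, Finset.sum_eq_single c]
    · rw [ind_of h]
    · intro s _ hs; rw [ind_of_not fun hps => hs (hp s hps), zero_mul]
    · intro hc; exact absurd (Finset.mem_univ c) hc
  · rw [ind_of_not h, zero_mul]
    exact Finset.sum_eq_zero fun s _ => by
      rw [ind_of_not fun hps => h (hp s hps ▸ hps), zero_mul]

lemma cv_dl_left (f : α → ℂ) : cv dl f = f := by
  funext z
  show ∑ s, ind (s = 1) * f (s⁻¹ * z) = f z
  rw [sum_point_fun (fun s => f (s⁻¹ * z)) 1 fun s hs => hs]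
  simp

lemma cv_dl_right (f : α → ℂ) : cv f dl = f := by
  funext z
  show ∑ s, f s * dl (s⁻¹ * z) = f z
  have : ∀ s, f s * dl (s⁻¹ * z) = ind (s⁻¹ * z = 1) * f s := fun s => by
    rw [mul_comm]; rfl
  rw [Finset.sum_congr rfl fun s _ => this s,
    sum_point_fun f z fun s hs => by simpa using inv_mul_eq_iff'.mp hs]
  simp

lemma sum_shift (a : α) (f : α → ℂ) : ∑ s, f (s⁻¹ * a) = ∑ s, f s :=
  Fintype.sum_equiv ((Equiv.inv α).trans (Equiv.mulRight a)) _ _ fun s => rfl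

lemma sumH (H : Subgroup α) : ∑ s, ind (s ∈ H) = (hc H : ℂ) := by
  simp [ind, Finset.sum_boole, hc]

lemma sumH' (H : Subgroup α) (a : α) : ∑ s, ind (s⁻¹ * a ∈ H) = (hc H : ℂ) :=
  (sum_shift a _).trans (sumH H)

lemma sumHH (H : Subgroup α) (a : α) :
    ∑ s, ind (s ∈ H ∧ s⁻¹ * a ∈ H) = ind (a ∈ H) * (hc H : ℂ) := by
  by_cases ha : a ∈ H
  · rw [ind_of ha, one_mul, ← sumH H]
    refine Finset.sum_congr rfl fun s _ => ind_congr
      ⟨And.left, fun hs => ⟨hs, H.mul_mem (H.inv_mem hs) ha⟩⟩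
  · rw [ind_of_not ha, zero_mul]
    refine Finset.sum_eq_zero fun s _ => ind_of_not ?_
    rintro ⟨h1, h2⟩
    exact ha (by simpa using H.mul_mem h1 h2)

lemma cv_c1_c1 : cv (c1 : α → ℂ) c1 = (Fintype.card α : ℂ) • c1 := by
  funext z; simp [cv, c1]

lemma cv_c1_eH (H : Subgroup α) : cv c1 (eH H) = (hc H : ℂ) • c1 := by
  funext z
  show ∑ s, 1 * ind (s⁻¹ * z ∈ H) = _
  simp only [one_mul, sumH' H z, Pi.smul_apply, c1, smul_eq_mul, mul_one]

lemma cv_eH_c1 (H : Subgroup α) : cv (eH H) c1 = (hc H : ℂ) • c1 := by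
  funext z
  show ∑ s, ind (s ∈ H) * 1 = _
  simp only [mul_one, sumH H, Pi.smul_apply, c1, smul_eq_mul]

lemma cv_eH_eH (H : Subgroup α) : cv (eH H) (eH H) = (hc H : ℂ) • eH H := by
  funext z
  show ∑ s, ind (s ∈ H) * ind (s⁻¹ * z ∈ H) = _
  simp only [ind_mul_ind, sumHH H z, Pi.smul_apply, eH, smul_eq_mul]
  ring

/-! ### Tensor products of functions -/

def tens {β : Type*} (f : α → ℂ) (g : β → ℂ) : α × β → ℂ := fun z => f z.1 * g z.2

lemma cv_tens {β : Type*} [Group β] [Fintype β] (f₁ g₁ : α → ℂ) (f₂ g₂ : β → ℂ) :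
    cv (tens f₁ f₂) (tens g₁ g₂) = tens (cv f₁ g₁) (cv f₂ g₂) := by
  funext z
  show ∑ s : α × β, _ = _
  rw [Fintype.sum_prod_type]
  show ∑ s1, ∑ s2, (f₁ s1 * f₂ s2) * (g₁ (s1⁻¹ * z.1) * g₂ (s2⁻¹ * z.2))
      = (∑ s1, f₁ s1 * g₁ (s1⁻¹ * z.1)) * (∑ s2, f₂ s2 * g₂ (s2⁻¹ * z.2))
  rw [Finset.sum_mul_sum]
  exact Finset.sum_congr rfl fun s1 _ => Finset.sum_congr rfl fun s2 _ => mul_mul_mul_comm _ _ _ _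

lemma tens_smul_left {β : Type*} (c : ℂ) (f : α → ℂ) (g : β → ℂ) :
    tens (c • f) g = c • tens f g := by
  funext z; simp [tens, mul_assoc]

lemma tens_smul_right {β : Type*} (c : ℂ) (f : α → ℂ) (g : β → ℂ) :
    tens f (c • g) = c • tens f g := by
  funext z; simp [tens]; ring

/-! ### The six basic functions on `G × G` -/

variable {G : Type*} [Group G] [Fintype G] (H : Subgroup G)

def fJ : G × G → ℂ := fun z => ind (z.2 = 1)
def fE : G × G → ℂ := fun z => ind (z.1 ∈ H ∧ z.2 = 1)
def gJ : G × G → ℂ := fun z => ind (z.1 = 1)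
def gE : G × G → ℂ := fun z => ind (z.1 = 1 ∧ z.2 ∈ H)
def fD : G × G → ℂ := fun z => ind (z.1 = z.2)
def fDH : G × G → ℂ := fun z => ind (z.1 = z.2 ∧ z.1 ∈ H)

lemma fJ_tens : (fJ : G × G → ℂ) = tens c1 dl := by
  funext z; simp [fJ, tens, c1, dl]
lemma fE_tens : (fE H : G × G → ℂ) = tens (eH H) dl := by
  funext z; simp [fE, tens, eH, dl, ind_mul_ind]
lemma gJ_tens : (gJ : G × G → ℂ) = tens dl c1 := by
  funext z; simp [gJ, tens, c1, dl]
lemma gE_tens : (gE H : G × G → ℂ) = tens dl (eH H) := by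
  funext z; simp [gE, tens, eH, dl, ind_mul_ind]

end GammaInt

namespace GammaInt

variable {G : Type*} [Group G] [Fintype G] (H : Subgroup G)

/-! ### Convolution algebra of the `f`/`g` families (via tensor products) -/

lemma cv_fJ_fJ : cv (fJ : G × G → ℂ) fJ = (Fintype.card G : ℂ) • fJ := by
  rw [fJ_tens, cv_tens, cv_c1_c1, cv_dl_left, tens_smul_left]

lemma cv_fE_fE : cv (fE H : G × G → ℂ) (fE H) = (hc H : ℂ) • fE H := by
  rw [fE_tens, cv_tens, cv_eH_eH, cv_dl_left, tens_smul_left]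

lemma cv_fJ_fE : cv (fJ : G × G → ℂ) (fE H) = (hc H : ℂ) • fJ := by
  rw [fJ_tens, fE_tens, cv_tens, cv_c1_eH, cv_dl_left, tens_smul_left]

lemma cv_fE_fJ : cv (fE H : G × G → ℂ) fJ = (hc H : ℂ) • fJ := by
  rw [fJ_tens, fE_tens, cv_tens, cv_eH_c1, cv_dl_left, tens_smul_left]

lemma cv_gJ_gJ : cv (gJ : G × G → ℂ) gJ = (Fintype.card G : ℂ) • gJ := by
  rw [gJ_tens, cv_tens, cv_c1_c1, cv_dl_left, tens_smul_right]

lemma cv_gE_gE : cv (gE H : G × G → ℂ) (gE H) = (hc H : ℂ) • gE H := by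
  rw [gE_tens, cv_tens, cv_eH_eH, cv_dl_left, tens_smul_right]

lemma cv_gJ_gE : cv (gJ : G × G → ℂ) (gE H) = (hc H : ℂ) • gJ := by
  rw [gJ_tens, gE_tens, cv_tens, cv_c1_eH, cv_dl_left, tens_smul_right]

lemma cv_gE_gJ : cv (gE H : G × G → ℂ) gJ = (hc H : ℂ) • gJ := by
  rw [gJ_tens, gE_tens, cv_tens, cv_eH_c1, cv_dl_left, tens_smul_right]

lemma cv_fJ_gJ_comm : cv (fJ : G × G → ℂ) gJ = cv gJ fJ := by
  simp only [fJ_tens, gJ_tens, fE_tens, gE_tens, cv_tens, cv_dl_left, cv_dl_right]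

lemma cv_fJ_gE_comm : cv (fJ : G × G → ℂ) (gE H) = cv (gE H) fJ := by
  simp only [fJ_tens, gJ_tens, fE_tens, gE_tens, cv_tens, cv_dl_left, cv_dl_right]

lemma cv_fE_gJ_comm : cv (fE H : G × G → ℂ) gJ = cv gJ (fE H) := by
  simp only [fJ_tens, gJ_tens, fE_tens, gE_tens, cv_tens, cv_dl_left, cv_dl_right]

lemma cv_fE_gE_comm : cv (fE H : G × G → ℂ) (gE H) = cv (gE H) (fE H) := by
  simp only [fJ_tens, gJ_tens, fE_tens, gE_tens, cv_tens, cv_dl_left, cv_dl_right]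

end GammaInt

namespace GammaInt

variable {G : Type*} [Group G] [Fintype G] (H : Subgroup G)

/-! ### Direct convolution computations involving the diagonal family -/

lemma cv_fD_fD : cv (fD : G × G → ℂ) fD = (Fintype.card G : ℂ) • fD := by
  funext z
  show ∑ s : G × G, fD s * fD (s⁻¹ * z) = _
  have hterm : ∀ s : G × G, fD s * fD (s⁻¹ * z)
      = ind (s.1 = s.2 ∧ s.1⁻¹ * z.1 = s.2⁻¹ * z.2) := fun s => by
    simp only [fD, Prod.fst_mul, Prod.snd_mul, Prod.fst_inv, Prod.snd_inv, ind_mul_ind]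
  rw [Finset.sum_congr rfl fun s _ => hterm s, Fintype.sum_prod_type,
    Finset.sum_congr rfl fun s1 _ =>
      sum_ind_point (p := fun s2 => s1 = s2 ∧ s1⁻¹ * z.1 = s2⁻¹ * z.2) s1 fun s2 h => h.1.symm]
  by_cases hz : z.1 = z.2
  · simp [hz, fD, Finset.card_univ]
  · have : ∀ s1 : G, ind (s1 = s1 ∧ s1⁻¹ * z.1 = s1⁻¹ * z.2) = 0 := fun s1 =>
      ind_of_not fun h => hz (mul_left_cancel h.2)
    simp [this, fD, hz]

lemma cv_fDH_fDH : cv (fDH H : G × G → ℂ) (fDH H) = (hc H : ℂ) • fDH H := by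
  funext z
  show ∑ s : G × G, fDH H s * fDH H (s⁻¹ * z) = _
  have hterm : ∀ s : G × G, fDH H s * fDH H (s⁻¹ * z)
      = ind ((s.1 = s.2 ∧ s.1 ∈ H) ∧ (s.1⁻¹ * z.1 = s.2⁻¹ * z.2 ∧ s.1⁻¹ * z.1 ∈ H)) := fun s => by
    simp only [fDH, Prod.fst_mul, Prod.snd_mul, Prod.fst_inv, Prod.snd_inv, ind_mul_ind]
  rw [Finset.sum_congr rfl fun s _ => hterm s, Fintype.sum_prod_type,
    Finset.sum_congr rfl fun s1 _ =>
      sum_ind_point (p := fun s2 => (s1 = s2 ∧ s1 ∈ H) ∧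
        (s1⁻¹ * z.1 = s2⁻¹ * z.2 ∧ s1⁻¹ * z.1 ∈ H)) s1 fun s2 h => h.1.1.symm]
  by_cases hz : z.1 = z.2
  · rw [Finset.sum_congr rfl fun s1 _ => ind_congr
      (show ((s1 = s1 ∧ s1 ∈ H) ∧ (s1⁻¹ * z.1 = s1⁻¹ * z.2 ∧ s1⁻¹ * z.1 ∈ H))
          ↔ (s1 ∈ H ∧ s1⁻¹ * z.1 ∈ H) from by
        constructor
        · rintro ⟨⟨-, h1⟩, -, h2⟩; exact ⟨h1, h2⟩
        · rintro ⟨h1, h2⟩; exact ⟨⟨rfl, h1⟩, by rw [hz], h2⟩), sumHH H z.1]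
    simp [fDH, hz, mul_comm]
  · have : ∀ s1 : G, ind ((s1 = s1 ∧ s1 ∈ H) ∧ (s1⁻¹ * z.1 = s1⁻¹ * z.2 ∧ s1⁻¹ * z.1 ∈ H)) = 0 :=
      fun s1 => ind_of_not fun h => hz (mul_left_cancel h.2.1)
    simp [this, fDH, hz]

lemma cv_fD_fDH : cv (fD : G × G → ℂ) (fDH H) = (hc H : ℂ) • fD := by
  funext z
  show ∑ s : G × G, fD s * fDH H (s⁻¹ * z) = _
  have hterm : ∀ s : G × G, fD s * fDH H (s⁻¹ * z)
      = ind (s.1 = s.2 ∧ (s.1⁻¹ * z.1 = s.2⁻¹ * z.2 ∧ s.1⁻¹ * z.1 ∈ H)) := fun s => by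
    simp only [fD, fDH, Prod.fst_mul, Prod.snd_mul, Prod.fst_inv, Prod.snd_inv, ind_mul_ind]
  rw [Finset.sum_congr rfl fun s _ => hterm s, Fintype.sum_prod_type,
    Finset.sum_congr rfl fun s1 _ =>
      sum_ind_point (p := fun s2 => s1 = s2 ∧ (s1⁻¹ * z.1 = s2⁻¹ * z.2 ∧ s1⁻¹ * z.1 ∈ H)) s1
        fun s2 h => h.1.symm]
  by_cases hz : z.1 = z.2
  · rw [Finset.sum_congr rfl fun s1 _ => ind_congr
      (show (s1 = s1 ∧ (s1⁻¹ * z.1 = s1⁻¹ * z.2 ∧ s1⁻¹ * z.1 ∈ H)) ↔ (s1⁻¹ * z.1 ∈ H) from by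
        constructor
        · rintro ⟨-, -, h⟩; exact h
        · intro h; exact ⟨rfl, by rw [hz], h⟩), sumH' H z.1]
    simp [fD, hz]
  · have : ∀ s1 : G, ind (s1 = s1 ∧ (s1⁻¹ * z.1 = s1⁻¹ * z.2 ∧ s1⁻¹ * z.1 ∈ H)) = 0 :=
      fun s1 => ind_of_not fun h => hz (mul_left_cancel h.2.1)
    simp [this, fD, hz]

lemma cv_fDH_fD : cv (fDH H : G × G → ℂ) fD = (hc H : ℂ) • fD := by
  funext z
  show ∑ s : G × G, fDH H s * fD (s⁻¹ * z) = _
  have hterm : ∀ s : G × G, fDH H s * fD (s⁻¹ * z)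
      = ind ((s.1 = s.2 ∧ s.1 ∈ H) ∧ s.1⁻¹ * z.1 = s.2⁻¹ * z.2) := fun s => by
    simp only [fD, fDH, Prod.fst_mul, Prod.snd_mul, Prod.fst_inv, Prod.snd_inv, ind_mul_ind]
  rw [Finset.sum_congr rfl fun s _ => hterm s, Fintype.sum_prod_type,
    Finset.sum_congr rfl fun s1 _ =>
      sum_ind_point (p := fun s2 => (s1 = s2 ∧ s1 ∈ H) ∧ s1⁻¹ * z.1 = s2⁻¹ * z.2) s1
        fun s2 h => h.1.1.symm]
  by_cases hz : z.1 = z.2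
  · rw [Finset.sum_congr rfl fun s1 _ => ind_congr
      (show ((s1 = s1 ∧ s1 ∈ H) ∧ s1⁻¹ * z.1 = s1⁻¹ * z.2) ↔ (s1 ∈ H) from by
        constructor
        · rintro ⟨⟨-, h⟩, -⟩; exact h
        · intro h; exact ⟨⟨rfl, h⟩, by rw [hz]⟩), sumH H]
    simp [fD, hz]
  · have : ∀ s1 : G, ind ((s1 = s1 ∧ s1 ∈ H) ∧ s1⁻¹ * z.1 = s1⁻¹ * z.2) = 0 :=
      fun s1 => ind_of_not fun h => hz (mul_left_cancel h.2)
    simp [this, fD, hz]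

end GammaInt

namespace GammaInt

variable {G : Type*} [Group G] [Fintype G] (H : Subgroup G)

lemma cv_fJ_fD : cv (fJ : G × G → ℂ) fD = fun _ => 1 := by
  funext z
  show ∑ s : G × G, fJ s * fD (s⁻¹ * z) = 1
  have hterm : ∀ s : G × G, fJ s * fD (s⁻¹ * z)
      = ind (s.2 = 1 ∧ s.1⁻¹ * z.1 = s.2⁻¹ * z.2) := fun s => by
    simp only [fJ, fD, Prod.fst_mul, Prod.snd_mul, Prod.fst_inv, Prod.snd_inv, ind_mul_ind]
  rw [Finset.sum_congr rfl fun s _ => hterm s]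
  refine (sum_ind_point ((z.1 * z.2⁻¹, 1) : G × G) ?_).trans ?_
  · rintro ⟨s1, s2⟩ ⟨h1, h2⟩
    dsimp only at h1 h2 ⊢
    subst h1
    rw [inv_one, one_mul] at h2
    rw [inv_mul_eq_iff'.mp h2]
  · simp

lemma cv_fD_fJ : cv (fD : G × G → ℂ) fJ = fun _ => 1 := by
  funext z
  show ∑ s : G × G, fD s * fJ (s⁻¹ * z) = 1
  have hterm : ∀ s : G × G, fD s * fJ (s⁻¹ * z)
      = ind (s.1 = s.2 ∧ s.2⁻¹ * z.2 = 1) := fun s => by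
    simp only [fJ, fD, Prod.fst_mul, Prod.snd_mul, Prod.fst_inv, Prod.snd_inv, ind_mul_ind]
  rw [Finset.sum_congr rfl fun s _ => hterm s]
  refine (sum_ind_point ((z.2, z.2) : G × G) ?_).trans ?_
  · rintro ⟨s1, s2⟩ ⟨h1, h2⟩
    dsimp only at h1 h2 ⊢
    have h2' : s2 = z.2 := by simpa using inv_mul_eq_iff'.mp h2
    rw [h1, h2']
  · simp

lemma cv_fJ_fDH : cv (fJ : G × G → ℂ) (fDH H) = fun z => ind (z.2 ∈ H) := by
  funext z
  show ∑ s : G × G, fJ s * fDH H (s⁻¹ * z) = _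
  have hterm : ∀ s : G × G, fJ s * fDH H (s⁻¹ * z)
      = ind (s.2 = 1 ∧ (s.1⁻¹ * z.1 = s.2⁻¹ * z.2 ∧ s.1⁻¹ * z.1 ∈ H)) := fun s => by
    simp only [fJ, fDH, Prod.fst_mul, Prod.snd_mul, Prod.fst_inv, Prod.snd_inv, ind_mul_ind]
  rw [Finset.sum_congr rfl fun s _ => hterm s]
  refine (sum_ind_point ((z.1 * z.2⁻¹, 1) : G × G) ?_).trans ?_
  · rintro ⟨s1, s2⟩ ⟨h1, h2⟩
    dsimp only at h1 h2 ⊢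
    subst h1
    rw [inv_one, one_mul] at h2
    rw [inv_mul_eq_iff'.mp h2.1]
  · have hg : (z.1 * z.2⁻¹)⁻¹ * z.1 = z.2 := by group
    simp [hg]

lemma cv_fDH_fJ : cv (fDH H : G × G → ℂ) fJ = fun z => ind (z.2 ∈ H) := by
  funext z
  show ∑ s : G × G, fDH H s * fJ (s⁻¹ * z) = _
  have hterm : ∀ s : G × G, fDH H s * fJ (s⁻¹ * z)
      = ind ((s.1 = s.2 ∧ s.1 ∈ H) ∧ s.2⁻¹ * z.2 = 1) := fun s => by
    simp only [fJ, fDH, Prod.fst_mul, Prod.snd_mul, Prod.fst_inv, Prod.snd_inv, ind_mul_ind]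
  rw [Finset.sum_congr rfl fun s _ => hterm s]
  refine (sum_ind_point ((z.2, z.2) : G × G) ?_).trans ?_
  · rintro ⟨s1, s2⟩ ⟨h1, h2⟩
    dsimp only at h1 h2 ⊢
    have h2' : s2 = z.2 := by simpa using inv_mul_eq_iff'.mp h2
    rw [h1.1, h2']
  · simp

lemma cv_fE_fD : cv (fE H : G × G → ℂ) fD = fun z => ind (z.1 * z.2⁻¹ ∈ H) := by
  funext z
  show ∑ s : G × G, fE H s * fD (s⁻¹ * z) = _
  have hterm : ∀ s : G × G, fE H s * fD (s⁻¹ * z)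
      = ind ((s.1 ∈ H ∧ s.2 = 1) ∧ s.1⁻¹ * z.1 = s.2⁻¹ * z.2) := fun s => by
    simp only [fE, fD, Prod.fst_mul, Prod.snd_mul, Prod.fst_inv, Prod.snd_inv, ind_mul_ind]
  rw [Finset.sum_congr rfl fun s _ => hterm s]
  refine (sum_ind_point ((z.1 * z.2⁻¹, 1) : G × G) ?_).trans ?_
  · rintro ⟨s1, s2⟩ ⟨h1, h2⟩
    dsimp only at h1 h2 ⊢
    rw [h1.2] at h2 ⊢
    rw [inv_one, one_mul] at h2
    rw [inv_mul_eq_iff'.mp h2]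
  · have hg : (z.1 * z.2⁻¹)⁻¹ * z.1 = z.2 := by group
    simp [hg]

lemma cv_fD_fE : cv (fD : G × G → ℂ) (fE H) = fun z => ind (z.2⁻¹ * z.1 ∈ H) := by
  funext z
  show ∑ s : G × G, fD s * fE H (s⁻¹ * z) = _
  have hterm : ∀ s : G × G, fD s * fE H (s⁻¹ * z)
      = ind (s.1 = s.2 ∧ (s.1⁻¹ * z.1 ∈ H ∧ s.2⁻¹ * z.2 = 1)) := fun s => by
    simp only [fE, fD, Prod.fst_mul, Prod.snd_mul, Prod.fst_inv, Prod.snd_inv, ind_mul_ind]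
  rw [Finset.sum_congr rfl fun s _ => hterm s]
  refine (sum_ind_point ((z.2, z.2) : G × G) ?_).trans ?_
  · rintro ⟨s1, s2⟩ ⟨h1, h2⟩
    dsimp only at h1 h2 ⊢
    have h2' : s2 = z.2 := by simpa using inv_mul_eq_iff'.mp h2.2
    rw [h1, h2']
  · simp

lemma cv_fE_fDH : cv (fE H : G × G → ℂ) (fDH H)
    = fun z => ind (z.1 * z.2⁻¹ ∈ H ∧ z.2 ∈ H) := by
  funext z
  show ∑ s : G × G, fE H s * fDH H (s⁻¹ * z) = _
  have hterm : ∀ s : G × G, fE H s * fDH H (s⁻¹ * z)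
      = ind ((s.1 ∈ H ∧ s.2 = 1) ∧ (s.1⁻¹ * z.1 = s.2⁻¹ * z.2 ∧ s.1⁻¹ * z.1 ∈ H)) := fun s => by
    simp only [fE, fDH, Prod.fst_mul, Prod.snd_mul, Prod.fst_inv, Prod.snd_inv, ind_mul_ind]
  rw [Finset.sum_congr rfl fun s _ => hterm s]
  refine (sum_ind_point ((z.1 * z.2⁻¹, 1) : G × G) ?_).trans ?_
  · rintro ⟨s1, s2⟩ ⟨h1, h2⟩
    dsimp only at h1 h2 ⊢
    rw [h1.2] at h2 ⊢
    rw [inv_one, one_mul] at h2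
    rw [inv_mul_eq_iff'.mp h2.1]
  · have hg : (z.1 * z.2⁻¹)⁻¹ * z.1 = z.2 := by group
    simp [hg, and_comm]

lemma cv_fDH_fE : cv (fDH H : G × G → ℂ) (fE H)
    = fun z => ind (z.2 ∈ H ∧ z.2⁻¹ * z.1 ∈ H) := by
  funext z
  show ∑ s : G × G, fDH H s * fE H (s⁻¹ * z) = _
  have hterm : ∀ s : G × G, fDH H s * fE H (s⁻¹ * z)
      = ind ((s.1 = s.2 ∧ s.1 ∈ H) ∧ (s.1⁻¹ * z.1 ∈ H ∧ s.2⁻¹ * z.2 = 1)) := fun s => by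
    simp only [fE, fDH, Prod.fst_mul, Prod.snd_mul, Prod.fst_inv, Prod.snd_inv, ind_mul_ind]
  rw [Finset.sum_congr rfl fun s _ => hterm s]
  refine (sum_ind_point ((z.2, z.2) : G × G) ?_).trans ?_
  · rintro ⟨s1, s2⟩ ⟨h1, h2⟩
    dsimp only at h1 h2 ⊢
    have h2' : s2 = z.2 := by simpa using inv_mul_eq_iff'.mp h2.2
    rw [h1.1, h2']
  · simp [and_comm]

end GammaInt

namespace GammaInt

variable {G : Type*} [Group G] [Fintype G] (H : Subgroup G)

/-! ### The coordinate swap -/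

lemma cv_swap {α β : Type*} [Group α] [Fintype α] [Group β] [Fintype β]
    (e : α ≃* β) (f g : β → ℂ) : cv (f ∘ e) (g ∘ e) = (cv f g) ∘ e := by
  funext z
  show ∑ s : α, f (e s) * g (e (s⁻¹ * z)) = ∑ t : β, f t * g (t⁻¹ * e z)
  refine Fintype.sum_equiv e.toEquiv _ _ fun s => ?_
  simp [map_mul, map_inv]

def sw : (G × G) ≃* (G × G) := MulEquiv.prodComm

lemma fJ_sw : (fJ : G × G → ℂ) ∘ (sw : (G × G) ≃* (G × G)) = gJ := rfl
lemma gJ_sw : (gJ : G × G → ℂ) ∘ (sw : (G × G) ≃* (G × G)) = fJ := rfl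
lemma fE_sw : (fE H : G × G → ℂ) ∘ (sw : (G × G) ≃* (G × G)) = gE H := by
  funext z; exact ind_congr and_comm
lemma gE_sw : (gE H : G × G → ℂ) ∘ (sw : (G × G) ≃* (G × G)) = fE H := by
  funext z; exact ind_congr and_comm
lemma fD_sw : (fD : G × G → ℂ) ∘ (sw : (G × G) ≃* (G × G)) = fD := by
  funext z; exact ind_congr eq_comm
lemma fDH_sw : (fDH H : G × G → ℂ) ∘ (sw : (G × G) ≃* (G × G)) = fDH H := by
  funext z
  refine ind_congr ⟨fun ⟨h1, h2⟩ => ⟨h1.symm, ?_⟩, fun ⟨h1, h2⟩ => ⟨h1.symm, ?_⟩⟩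
  · rwa [h1] at h2
  · rwa [h1] at h2

lemma cv_gJ_gJ' : cv (gJ : G × G → ℂ) gJ = (Fintype.card G : ℂ) • gJ := cv_gJ_gJ

/-- derive a `cv` identity for swapped functions -/
lemma cv_sw_eq {f g f' g' : G × G → ℂ} (hf : f' ∘ (sw : (G × G) ≃* (G × G)) = f)
    (hg : g' ∘ (sw : (G × G) ≃* (G × G)) = g) :
    cv f g = (cv f' g') ∘ (sw : (G × G) ≃* (G × G)) := by
  rw [← hf, ← hg, cv_swap]

/-! ### Diagonal-family commutations for the `g` family, via the swap -/

lemma cv_gJ_fD : cv (gJ : G × G → ℂ) fD = fun _ => 1 := by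
  rw [cv_sw_eq fJ_sw fD_sw, cv_fJ_fD]; rfl

lemma cv_fD_gJ : cv (fD : G × G → ℂ) gJ = fun _ => 1 := by
  rw [cv_sw_eq fD_sw fJ_sw, cv_fD_fJ]; rfl

lemma cv_gJ_fDH : cv (gJ : G × G → ℂ) (fDH H) = fun z => ind (z.1 ∈ H) := by
  rw [cv_sw_eq fJ_sw (fDH_sw H), cv_fJ_fDH]; rfl

lemma cv_fDH_gJ : cv (fDH H : G × G → ℂ) gJ = fun z => ind (z.1 ∈ H) := by
  rw [cv_sw_eq (fDH_sw H) fJ_sw, cv_fDH_fJ]; rfl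

lemma cv_gE_fD : cv (gE H : G × G → ℂ) fD = fun z => ind (z.2 * z.1⁻¹ ∈ H) := by
  rw [cv_sw_eq (fE_sw H) fD_sw, cv_fE_fD]; rfl

lemma cv_fD_gE : cv (fD : G × G → ℂ) (gE H) = fun z => ind (z.1⁻¹ * z.2 ∈ H) := by
  rw [cv_sw_eq fD_sw (fE_sw H), cv_fD_fE]; rfl

lemma cv_gE_fDH : cv (gE H : G × G → ℂ) (fDH H)
    = fun z => ind (z.2 * z.1⁻¹ ∈ H ∧ z.1 ∈ H) := by
  rw [cv_sw_eq (fE_sw H) (fDH_sw H), cv_fE_fDH]; rfl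

lemma cv_fDH_gE : cv (fDH H : G × G → ℂ) (gE H)
    = fun z => ind (z.1 ∈ H ∧ z.1⁻¹ * z.2 ∈ H) := by
  rw [cv_sw_eq (fDH_sw H) (fE_sw H), cv_fDH_fE]; rfl

/-! ### Commutation identities (using normality) -/

variable [H.Normal]

lemma cv_fJ_fD_comm : cv (fJ : G × G → ℂ) fD = cv fD fJ := by
  rw [cv_fJ_fD, cv_fD_fJ]

lemma cv_fJ_fDH_comm : cv (fJ : G × G → ℂ) (fDH H) = cv (fDH H) fJ := by
  rw [cv_fJ_fDH, cv_fDH_fJ]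

lemma cv_fE_fD_comm : cv (fE H : G × G → ℂ) fD = cv fD (fE H) := by
  rw [cv_fE_fD, cv_fD_fE]
  funext z
  exact ind_congr ⟨fun h => (‹H.Normal›.mem_comm h), fun h => (‹H.Normal›.mem_comm h)⟩

lemma cv_fE_fDH_comm : cv (fE H : G × G → ℂ) (fDH H) = cv (fDH H) (fE H) := by
  rw [cv_fE_fDH, cv_fDH_fE]
  funext z
  refine ind_congr ⟨fun ⟨h1, h2⟩ => ⟨h2, ‹H.Normal›.mem_comm h1⟩,
    fun ⟨h1, h2⟩ => ⟨‹H.Normal›.mem_comm h2, h1⟩⟩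

lemma cv_gJ_fD_comm : cv (gJ : G × G → ℂ) fD = cv fD gJ := by
  rw [cv_gJ_fD, cv_fD_gJ]

lemma cv_gJ_fDH_comm : cv (gJ : G × G → ℂ) (fDH H) = cv (fDH H) gJ := by
  rw [cv_gJ_fDH, cv_fDH_gJ]

lemma cv_gE_fD_comm : cv (gE H : G × G → ℂ) fD = cv fD (gE H) := by
  rw [cv_gE_fD, cv_fD_gE]
  funext z
  exact ind_congr ⟨fun h => (‹H.Normal›.mem_comm h), fun h => (‹H.Normal›.mem_comm h)⟩

lemma cv_gE_fDH_comm : cv (gE H : G × G → ℂ) (fDH H) = cv (fDH H) (gE H) := by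
  rw [cv_gE_fDH, cv_fDH_gE]
  funext z
  refine ind_congr ⟨fun ⟨h1, h2⟩ => ⟨h2, ‹H.Normal›.mem_comm h1⟩,
    fun ⟨h1, h2⟩ => ⟨‹H.Normal›.mem_comm h2, h1⟩⟩

end GammaInt

namespace GammaInt

/-! ### The cubic annihilating polynomial -/

lemma cubic {V : Type*} [Fintype V] [DecidableEq V] (J E : Matrix V V ℂ) (n h : ℂ)
    (hJJ : J * J = n • J) (hEE : E * E = h • E) (hJE : J * E = h • J) (hEJ : E * J = h • J) :
    (J - E) * (((J - E) + h • 1) * ((J - E) - (n - h) • 1)) = 0 := by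
  set X := J - E with hX
  have hXJ : X * J = n • J - h • J := by rw [hX, sub_mul, hJJ, hEJ]
  have hXE : X * E = h • J - h • E := by rw [hX, sub_mul, hJE, hEE]
  have hXX : X * X = (n - 2*h) • J + h • E := by
    rw [hX, mul_sub, hXJ, hXE]; module
  have hXXX : X * (X * X) = (n^2 - 3*n*h + 3*h^2) • J - (h^2) • E := by
    rw [hXX, mul_add, Matrix.mul_smul, Matrix.mul_smul, hXJ, hXE]; module
  have key : X * ((X + h • 1) * (X - (n - h) • 1))
      = X * (X * X) + (2*h - n) • (X * X) + (h^2 - n*h) • X := by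
    simp only [mul_add, add_mul, mul_sub, sub_mul, Matrix.mul_smul, Matrix.smul_mul, mul_one,
      one_mul, mul_assoc]
    module
  rw [key, hXXX, hXX, hX]
  module

variable {G : Type*} [Group G] [Fintype G] (H : Subgroup G)

/-! ### The three matrices -/

def X1 : Matrix (G × G) (G × G) ℂ := TM fJ - TM (fE H)
def X2 : Matrix (G × G) (G × G) ℂ := TM gJ - TM (gE H)
def X3 : Matrix (G × G) (G × G) ℂ := TM fD - TM (fDH H)

lemma X1_cubic : X1 H * ((X1 H + (hc H : ℂ) • 1) *
    (X1 H - ((Fintype.card G : ℂ) - (hc H : ℂ)) • 1)) = 0 :=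
  cubic _ _ _ _
    (by rw [TM_mul, cv_fJ_fJ, TM_smul])
    (by rw [TM_mul, cv_fE_fE, TM_smul])
    (by rw [TM_mul, cv_fJ_fE, TM_smul])
    (by rw [TM_mul, cv_fE_fJ, TM_smul])

lemma X2_cubic : X2 H * ((X2 H + (hc H : ℂ) • 1) *
    (X2 H - ((Fintype.card G : ℂ) - (hc H : ℂ)) • 1)) = 0 :=
  cubic _ _ _ _
    (by rw [TM_mul, cv_gJ_gJ, TM_smul])
    (by rw [TM_mul, cv_gE_gE, TM_smul])
    (by rw [TM_mul, cv_gJ_gE, TM_smul])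
    (by rw [TM_mul, cv_gE_gJ, TM_smul])

lemma X3_cubic : X3 H * ((X3 H + (hc H : ℂ) • 1) *
    (X3 H - ((Fintype.card G : ℂ) - (hc H : ℂ)) • 1)) = 0 :=
  cubic _ _ _ _
    (by rw [TM_mul, cv_fD_fD, TM_smul])
    (by rw [TM_mul, cv_fDH_fDH, TM_smul])
    (by rw [TM_mul, cv_fD_fDH, TM_smul])
    (by rw [TM_mul, cv_fDH_fD, TM_smul])

variable [H.Normal]

lemma X1_X2_comm : X1 H * X2 H = X2 H * X1 H := by
  simp only [X1, X2, sub_mul, mul_sub,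
    TM_comm (cv_fJ_gJ_comm), TM_comm (cv_fJ_gE_comm H),
    TM_comm (cv_fE_gJ_comm H), TM_comm (cv_fE_gE_comm H)]
  abel

lemma X1_X3_comm : X1 H * X3 H = X3 H * X1 H := by
  simp only [X1, X3, sub_mul, mul_sub,
    TM_comm (cv_fJ_fD_comm), TM_comm (cv_fJ_fDH_comm H),
    TM_comm (cv_fE_fD_comm H), TM_comm (cv_fE_fDH_comm H)]
  abel

lemma X2_X3_comm : X2 H * X3 H = X3 H * X2 H := by
  simp only [X2, X3, sub_mul, mul_sub,
    TM_comm (cv_gJ_fD_comm), TM_comm (cv_gJ_fDH_comm H),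
    TM_comm (cv_gE_fD_comm H), TM_comm (cv_gE_fDH_comm H)]
  abel

end GammaInt

namespace GammaInt

open Matrix

/-! ### Common eigenvectors of commuting matrices -/

lemma exists_common_eigen {V : Type*} [Fintype V] [DecidableEq V]
    (M₁ M₂ N : Matrix V V ℂ) (a b : ℂ)
    (h1 : M₁ * N = N * M₁) (h2 : M₂ * N = N * M₂)
    (v : V → ℂ) (hv : v ≠ 0) (e1 : M₁ *ᵥ v = a • v) (e2 : M₂ *ᵥ v = b • v) :
    ∃ (c : ℂ) (w : V → ℂ), w ≠ 0 ∧ M₁ *ᵥ w = a • w ∧ M₂ *ᵥ w = b • w ∧ N *ᵥ w = c • w := by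
  classical
  set W : Submodule ℂ (V → ℂ) :=
    LinearMap.ker (M₁.mulVecLin - a • LinearMap.id) ⊓
    LinearMap.ker (M₂.mulVecLin - b • LinearMap.id) with hW
  have memW : ∀ x : V → ℂ, x ∈ W ↔ (M₁ *ᵥ x = a • x ∧ M₂ *ᵥ x = b • x) := by
    intro x
    simp [hW, Submodule.mem_inf, LinearMap.mem_ker, LinearMap.sub_apply,
      Matrix.mulVecLin_apply, LinearMap.smul_apply, LinearMap.id_apply, sub_eq_zero]
  have hvW : v ∈ W := (memW v).mpr ⟨e1, e2⟩
  have hNW : ∀ x ∈ W, N.mulVecLin x ∈ W := by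
    intro x hx
    obtain ⟨hx1, hx2⟩ := (memW x).mp hx
    refine (memW _).mpr ⟨?_, ?_⟩
    · rw [Matrix.mulVecLin_apply, Matrix.mulVec_mulVec, h1, ← Matrix.mulVec_mulVec, hx1,
        Matrix.mulVec_smul]
    · rw [Matrix.mulVecLin_apply, Matrix.mulVec_mulVec, h2, ← Matrix.mulVec_mulVec, hx2,
        Matrix.mulVec_smul]
  haveI : Nontrivial W :=
    ⟨⟨⟨v, hvW⟩, 0, fun hvz => hv (by simpa using congrArg Subtype.val hvz)⟩⟩
  obtain ⟨c, hc⟩ := Module.End.exists_eigenvalue (N.mulVecLin.restrict hNW)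
  obtain ⟨w, hw⟩ := hc.exists_hasEigenvector
  have hwv : N *ᵥ (w : V → ℂ) = c • (w : V → ℂ) := by
    have := congrArg Subtype.val hw.apply_eq_smul
    simpa [LinearMap.restrict_apply, Matrix.mulVecLin_apply] using this
  obtain ⟨hw1, hw2⟩ := (memW (w : V → ℂ)).mp w.2
  exact ⟨c, w, fun h0 => hw.2 (ZeroMemClass.coe_eq_zero.mp h0), hw1, hw2, hwv⟩

lemma eig_root {V : Type*} [Fintype V] [DecidableEq V] (X : Matrix V V ℂ) (n h : ℂ)
    (hp : X * ((X + h • 1) * (X - (n - h) • 1)) = 0)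
    (w : V → ℂ) (hw : w ≠ 0) (c : ℂ) (he : X *ᵥ w = c • w) :
    c = 0 ∨ c = -h ∨ c = n - h := by
  have h1 : (X + h • 1) *ᵥ w = (c + h) • w := by
    rw [Matrix.add_mulVec, he, Matrix.smul_mulVec, Matrix.one_mulVec, add_smul]
  have h2 : (X - (n - h) • 1) *ᵥ w = (c - (n - h)) • w := by
    rw [Matrix.sub_mulVec, he, Matrix.smul_mulVec, Matrix.one_mulVec]; module
  have h3 : (0 : Matrix V V ℂ) *ᵥ w = (c * ((c + h) * (c - (n - h)))) • w := by
    rw [← hp, ← Matrix.mulVec_mulVec, ← Matrix.mulVec_mulVec, h2, Matrix.mulVec_smul, h1,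
      Matrix.mulVec_smul, Matrix.mulVec_smul, he]
    module
  rw [Matrix.zero_mulVec] at h3
  have h4 : c * ((c + h) * (c - (n - h))) = 0 := by
    by_contra hne
    exact hw (by simpa [smul_eq_zero, hne] using h3.symm)
  rcases mul_eq_zero.mp h4 with h5 | h5
  · exact Or.inl h5
  rcases mul_eq_zero.mp h5 with h6 | h6
  · exact Or.inr (Or.inl (by linear_combination h6))
  · exact Or.inr (Or.inr (by linear_combination h6))

/-! ### Identification of the adjacency matrix -/

variable {G : Type*} [Group G] [Fintype G] (H : Subgroup G)

lemma SH_mem_iff (x y : G) : ((x, y) ∈ SH G H) ↔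
    ((x ∉ H ∧ y = 1) ∨ (x = 1 ∧ y ∉ H) ∨ (x ∉ H ∧ x = y)) := by
  constructor
  · rintro (⟨g, hg, h⟩ | ⟨g, hg, h⟩ | ⟨g, hg, h⟩) <;>
      obtain ⟨h1, h2⟩ := Prod.mk.injEq .. ▸ h <;> subst h1 <;> subst h2
    · exact Or.inl ⟨hg, rfl⟩
    · exact Or.inr (Or.inl ⟨rfl, hg⟩)
    · exact Or.inr (Or.inr ⟨hg, rfl⟩)
  · rintro (⟨hx, hy⟩ | ⟨hx, hy⟩ | ⟨hx, hxy⟩)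
    · exact Or.inl ⟨x, hx, by rw [hy]⟩
    · exact Or.inr (Or.inl ⟨y, hy, by rw [hx]⟩)
    · exact Or.inr (Or.inr ⟨x, hx, by rw [hxy]⟩)

lemma ind_SH (w : G × G) : ind (w ≠ 1 ∧ w ∈ SH G H)
    = (fJ w - fE H w) + (gJ w - gE H w) + (fD w - fDH H w) := by
  obtain ⟨x, y⟩ := w
  rw [ind_congr (and_congr (show ((x, y) ≠ (1 : G × G)) ↔ ¬(x = 1 ∧ y = 1) from by
    simp [Prod.ext_iff]) (SH_mem_iff H x y))]
  simp only [fJ, fE, gJ, gE, fD, fDH]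
  by_cases hx : x ∈ H <;> by_cases hy : y ∈ H <;> by_cases hx1 : x = 1 <;>
    by_cases hy1 : y = 1 <;> by_cases hxy : x = y <;>
    simp_all [ind, H.one_mem] <;> norm_num

lemma adj_eq : (Gamma G H).adjMatrix ℂ = X1 H + X2 H + X3 H := by
  ext u v
  rw [SimpleGraph.adjMatrix_apply, ← ind_eq_ite]
  have hiff : (Gamma G H).Adj u v ↔ (u * v⁻¹ ≠ 1 ∧ u * v⁻¹ ∈ SH G H) := by
    constructor
    · rintro ⟨h1, h2⟩; exact ⟨fun he => h1 (by rwa [mul_inv_eq_one] at he), h2⟩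
    · rintro ⟨h1, h2⟩; exact ⟨fun he => h1 (by simp [he]), h2⟩
  rw [ind_congr hiff, ind_SH H (u * v⁻¹)]
  simp [X1, X2, X3, Matrix.add_apply, Matrix.sub_apply, TM_apply]

end GammaInt

open GammaInt Matrix

/-- If `H` is a normal subgroup of a finite group `G`, then `Γ_H(G)` is
integral: every complex eigenvalue of its adjacency matrix is an integer. -/
theorem integral_of_normal (G : Type*) [Group G] [Fintype G] (H : Subgroup G) [H.Normal] :
    ∀ z : ℂ, (((Gamma G H).adjMatrix ℂ).charpoly).IsRoot z → ∃ m : ℤ, z = (m : ℂ) := by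
  intro z hroot
  classical
  set A := (Gamma G H).adjMatrix ℂ with hA
  -- an eigenvector for `z`
  have hdet : (z • (1 : Matrix (G × G) (G × G) ℂ) - A).det = 0 := by
    have hmap : (Matrix.charmatrix A).map (Polynomial.evalRingHom z)
        = z • (1 : Matrix (G × G) (G × G) ℂ) - A := by
      ext i j
      by_cases hij : i = j
      · subst hij
        simp [Matrix.charmatrix_apply_eq, Matrix.map_apply, Matrix.sub_apply,
          Matrix.smul_apply, Matrix.one_apply_eq]
      · simp [Matrix.charmatrix_apply_ne _ _ _ hij, Matrix.map_apply, Matrix.sub_apply,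
          Matrix.smul_apply, Matrix.one_apply_ne hij]
    rw [← hmap, ← RingHom.mapMatrix_apply, ← RingHom.map_det]
    simpa [Matrix.charpoly, Polynomial.coe_evalRingHom] using hroot
  obtain ⟨v, hv0, hveq⟩ := Matrix.exists_mulVec_eq_zero_iff.mpr hdet
  have hAv : A *ᵥ v = z • v := by
    rw [Matrix.sub_mulVec, sub_eq_zero] at hveq
    rw [← hveq, Matrix.smul_mulVec, Matrix.one_mulVec]
  -- decomposition and commutation
  have hA3 : A = X1 H + X2 H + X3 H := adj_eq H
  have cA1 : A * X1 H = X1 H * A := by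
    rw [hA3, add_mul, add_mul, mul_add, mul_add, X1_X2_comm H, X1_X3_comm H]
  have cA2 : A * X2 H = X2 H * A := by
    rw [hA3, add_mul, add_mul, mul_add, mul_add, X1_X2_comm H, ← X2_X3_comm H]
  -- a common eigenvector of `A`, `X1`, `X2`
  obtain ⟨c1v, w1, hw1, hAw1, -, hX1w1⟩ :=
    exists_common_eigen A 1 (X1 H) z 1 cA1 (by rw [Matrix.one_mul, Matrix.mul_one]) v hv0 hAv
      (by rw [Matrix.one_mulVec, one_smul])
  obtain ⟨c2v, w2, hw2, hAw2, hX1w2, hX2w2⟩ :=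
    exists_common_eigen A (X1 H) (X2 H) z c1v cA2 (X1_X2_comm H) w1 hw1 hAw1 hX1w1
  have hX3w2 : X3 H *ᵥ w2 = (z - c1v - c2v) • w2 := by
    have hX3 : X3 H = A - X1 H - X2 H := by rw [hA3]; abel
    rw [hX3, Matrix.sub_mulVec, Matrix.sub_mulVec, hAw2, hX1w2, hX2w2]
    module
  -- all three eigenvalues are integers
  have r1 := eig_root (X1 H) _ _ (X1_cubic H) w2 hw2 c1v hX1w2
  have r2 := eig_root (X2 H) _ _ (X2_cubic H) w2 hw2 c2v hX2w2
  have r3 := eig_root (X3 H) _ _ (X3_cubic H) w2 hw2 (z - c1v - c2v) hX3w2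
  have hint : ∀ c : ℂ, (c = 0 ∨ c = -(hc H : ℂ) ∨ c = (Fintype.card G : ℂ) - (hc H : ℂ)) →
      ∃ m : ℤ, c = (m : ℂ) := by
    rintro c (rfl | rfl | rfl)
    · exact ⟨0, by norm_num⟩
    · exact ⟨-(hc H : ℤ), by push_cast; ring⟩
    · exact ⟨(Fintype.card G : ℤ) - (hc H : ℤ), by push_cast; ring⟩
  obtain ⟨m1, hm1⟩ := hint _ r1
  obtain ⟨m2, hm2⟩ := hint _ r2
  obtain ⟨m3, hm3⟩ := hint _ r3
  refine ⟨m1 + m2 + m3, ?_⟩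
  push_cast
  linear_combination hm1 + hm2 + hm3
end
end

section
/- Let G be a finite group and H a proper subgroup of G. Then each of the three Cayley graphs Cay(G × G, S_H^(1)), Cay(G × G, S_H^(2)) and Cay(G × G, S_H^(3)) is integral, i.e., every eigenvalue of its adjacency matrix (viewed as a complex matrix) is an integer. -/
open Finset Polynomial
open scoped Classical

noncomputable section

/-- The Cayley graph of a group `K` with respect to an inverse-closed connection set `S`. -/
def cayley (K : Type*) [Group K] (S : Set K) (hS : ∀ p ∈ S, p⁻¹ ∈ S) : SimpleGraph K where
  Adj u v := u ≠ v ∧ u * v⁻¹ ∈ S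
  symm := by
    constructor
    rintro u v ⟨hne, hmem⟩
    refine ⟨hne.symm, ?_⟩
    have h : v * u⁻¹ = (u * v⁻¹)⁻¹ := by simp
    rw [h]; exact hS _ hmem
  loopless := ⟨fun u h => h.1 rfl⟩

/-- `S_H^(1) = (G \ H) × {1}`. -/
def S1 (G : Type*) [Group G] (H : Subgroup G) : Set (G × G) := {p | p.1 ∉ H ∧ p.2 = 1}

/-- `S_H^(2) = {1} × (G \ H)`. -/
def S2 (G : Type*) [Group G] (H : Subgroup G) : Set (G × G) := {p | p.1 = 1 ∧ p.2 ∉ H}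

/-- `S_H^(3) = {(g,g) : g ∈ G \ H}`. -/
def S3 (G : Type*) [Group G] (H : Subgroup G) : Set (G × G) := {p | p.1 ∉ H ∧ p.2 = p.1}

lemma S1_inv (G : Type*) [Group G] (H : Subgroup G) : ∀ p ∈ S1 G H, p⁻¹ ∈ S1 G H := by
  rintro ⟨a, b⟩ ⟨ha, hb⟩
  exact ⟨fun h => ha (by simpa using H.inv_mem h), by simp [show b = 1 from hb]⟩

lemma S2_inv (G : Type*) [Group G] (H : Subgroup G) : ∀ p ∈ S2 G H, p⁻¹ ∈ S2 G H := by
  rintro ⟨a, b⟩ ⟨ha, hb⟩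
  exact ⟨by simp [show a = 1 from ha], fun h => hb (by simpa using H.inv_mem h)⟩

lemma S3_inv (G : Type*) [Group G] (H : Subgroup G) : ∀ p ∈ S3 G H, p⁻¹ ∈ S3 G H := by
  rintro ⟨a, b⟩ ⟨ha, hb⟩
  exact ⟨fun h => ha (by simpa using H.inv_mem h), by simp [show b = a from hb]⟩

/-- `Cay(G × G, S_H^(1))`. -/
def Gamma1 (G : Type*) [Group G] (H : Subgroup G) : SimpleGraph (G × G) :=
  cayley (G × G) (S1 G H) (S1_inv G H)

/-- `Cay(G × G, S_H^(2))`. -/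
def Gamma2 (G : Type*) [Group G] (H : Subgroup G) : SimpleGraph (G × G) :=
  cayley (G × G) (S2 G H) (S2_inv G H)

/-- `Cay(G × G, S_H^(3))`. -/
def Gamma3 (G : Type*) [Group G] (H : Subgroup G) : SimpleGraph (G × G) :=
  cayley (G × G) (S3 G H) (S3_inv G H)


open scoped Kronecker

section Aux

/-- Evaluating the characteristic polynomial at `z` gives `det (z • 1 - A)`. -/
lemma aux_charpoly_eval_eq {ι : Type*} [Fintype ι] [DecidableEq ι] (A : Matrix ι ι ℂ) (z : ℂ) :
    A.charpoly.eval z = (z • (1 : Matrix ι ι ℂ) - A).det := by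
  rw [Matrix.charpoly, eval_det, Matrix.matPolyEquiv_charmatrix, eval_sub, eval_X, eval_C]
  congr 1
  ext i j
  simp [Matrix.scalar_apply, Matrix.one_apply, Matrix.diagonal_apply]

/-- If `A` satisfies the cubic `(A - a)·A·(A + c) = 0`, every root of its characteristic
polynomial is `a`, `0` or `-c`. -/
lemma aux_cubic_root {ι : Type*} [Fintype ι] [DecidableEq ι] (A : Matrix ι ι ℂ)
    (a c : ℂ) (hA : (A - a • 1) * (A * (A + c • 1)) = 0) (z : ℂ)
    (hz : A.charpoly.IsRoot z) : z = a ∨ z = 0 ∨ z = -c := by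
  have hdet : (z • (1 : Matrix ι ι ℂ) - A).det = 0 := by
    rw [← aux_charpoly_eval_eq]; exact hz
  obtain ⟨v, hv0, hv⟩ := (Matrix.exists_mulVec_eq_zero_iff).2 hdet
  have hAv : A.mulVec v = z • v := by
    have := hv
    rw [Matrix.sub_mulVec, sub_eq_zero] at this
    simpa [Matrix.smul_mulVec, Matrix.one_mulVec] using this.symm
  have key : ((z - a) * (z * (z + c))) • v = 0 := by
    have h1 : (A + c • 1).mulVec v = (z + c) • v := by
      simp [Matrix.add_mulVec, hAv, Matrix.smul_mulVec, Matrix.one_mulVec, add_smul]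
    have h2 : (A * (A + c • 1)).mulVec v = (z * (z + c)) • v := by
      rw [← Matrix.mulVec_mulVec, h1, Matrix.mulVec_smul, hAv, smul_smul, mul_comm]
    have h3 : ((A - a • 1) * (A * (A + c • 1))).mulVec v = ((z - a) * (z * (z + c))) • v := by
      rw [← Matrix.mulVec_mulVec, h2, Matrix.mulVec_smul, Matrix.sub_mulVec, hAv,
        Matrix.smul_mulVec, Matrix.one_mulVec, ← sub_smul, smul_smul, mul_comm]
    rw [hA] at h3
    simpa using h3.symm
  have : (z - a) * (z * (z + c)) = 0 := by
    by_contra h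
    exact hv0 (by simpa [h] using (smul_eq_zero.1 key).resolve_left h)
  rcases mul_eq_zero.1 this with h | h
  · left; exact sub_eq_zero.1 h
  · rcases mul_eq_zero.1 h with h | h
    · right; left; exact h
    · right; right; exact eq_neg_of_add_eq_zero_left h

variable {G : Type*} [Group G] [Fintype G] (H : Subgroup G)

lemma aux_row_sum (u : G) :
    ∑ w : G, (if u * w⁻¹ ∈ H then (1 : ℂ) else 0) = (Fintype.card H : ℂ) := by
  rw [Finset.sum_boole]
  norm_cast
  rw [Fintype.card_subtype]
  apply Finset.card_bij' (fun w _ => u * w⁻¹) (fun k _ => k⁻¹ * u)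
  · intro w hw; simp at hw ⊢; exact hw
  · intro k hk; simp at hk ⊢; simpa using hk
  · intro w hw; group
  · intro k hk; group

lemma aux_col_sum (v : G) :
    ∑ w : G, (if w * v⁻¹ ∈ H then (1 : ℂ) else 0) = (Fintype.card H : ℂ) := by
  rw [Finset.sum_boole]
  norm_cast
  rw [Fintype.card_subtype]
  apply Finset.card_bij' (fun w _ => w * v⁻¹) (fun k _ => k * v)
  · intro w hw; simp at hw ⊢; exact hw
  · intro k hk; simp at hk ⊢; simpa using hk
  · intro w hw; group
  · intro k hk; group

/-- The all-ones matrix on `G`. -/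
def Jmat : Matrix G G ℂ := Matrix.of fun _ _ => 1

/-- The indicator matrix of the coset relation of `H`. -/
def Bmat : Matrix G G ℂ := Matrix.of fun u v => if u * v⁻¹ ∈ H then 1 else 0

/-- `Mmat = J - B`, the adjacency matrix of `Cay(G, G \ H)`. -/
def Mmat : Matrix G G ℂ := Jmat - Bmat H

lemma aux_JJ : (Jmat : Matrix G G ℂ) * Jmat = (Fintype.card G : ℂ) • Jmat := by
  ext u v; simp [Jmat, Matrix.mul_apply]

lemma aux_JB : (Jmat : Matrix G G ℂ) * Bmat H = (Fintype.card H : ℂ) • Jmat := by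
  ext u v; simp [Jmat, Bmat, Matrix.mul_apply, aux_col_sum H v]

lemma aux_BJ : Bmat H * (Jmat : Matrix G G ℂ) = (Fintype.card H : ℂ) • Jmat := by
  ext u v; simp [Jmat, Bmat, Matrix.mul_apply, aux_row_sum H u]

lemma aux_BB : Bmat H * Bmat H = (Fintype.card H : ℂ) • Bmat H := by
  ext u v
  simp only [Bmat, Matrix.mul_apply, Matrix.smul_apply, Matrix.of_apply, ite_mul, one_mul,
    zero_mul, smul_eq_mul]
  by_cases huv : u * v⁻¹ ∈ H
  · rw [if_pos huv, mul_one]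
    have : ∀ w : G, (if u * w⁻¹ ∈ H then (if w * v⁻¹ ∈ H then (1:ℂ) else 0) else 0)
        = (if u * w⁻¹ ∈ H then (1:ℂ) else 0) := by
      intro w
      by_cases hw : u * w⁻¹ ∈ H
      · have : w * v⁻¹ ∈ H := by
          have := H.mul_mem (H.inv_mem hw) huv
          simpa [mul_assoc] using this
        simp [hw, this]
      · simp [hw]
    rw [Finset.sum_congr rfl fun w _ => this w, aux_row_sum H u]
  · rw [if_neg huv, mul_zero]
    apply Finset.sum_eq_zero
    intro w _
    by_cases hw : u * w⁻¹ ∈ H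
    · have hwv : w * v⁻¹ ∉ H := fun hh => huv (by simpa [mul_assoc] using H.mul_mem hw hh)
      simp [hw, hwv]
    · simp [hw]

lemma aux_M_cubic :
    (Mmat H - ((Fintype.card G : ℂ) - (Fintype.card H : ℂ)) • 1) *
      (Mmat H * (Mmat H + (Fintype.card H : ℂ) • 1)) = 0 := by
  have step1 : Mmat H * (Mmat H + (Fintype.card H : ℂ) • (1 : Matrix G G ℂ)) =
      ((Fintype.card G : ℂ) - (Fintype.card H : ℂ)) • Jmat := by
    simp only [Mmat, mul_add, sub_mul, mul_sub, aux_JJ, aux_JB, aux_BJ, aux_BB,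
      Matrix.mul_smul, mul_one, Matrix.mul_one]
    module
  rw [step1]
  simp only [Mmat, sub_mul, Matrix.smul_mul, Matrix.mul_smul, aux_JJ, aux_BJ, Matrix.one_mul]
  module

lemma aux_sub_kron {l m q r : Type*} (A B : Matrix l m ℂ) (C : Matrix q r ℂ) :
    (A - B) ⊗ₖ C = A ⊗ₖ C - B ⊗ₖ C := by
  ext ⟨i, j⟩ ⟨k, t⟩; simp [Matrix.kroneckerMap_apply, sub_mul]

lemma aux_adj1_iff (u1 u2 v1 v2 : G) :
    (Gamma1 G H).Adj (u1, u2) (v1, v2) ↔ (u1 * v1⁻¹ ∉ H ∧ u2 = v2) := by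
  constructor
  · rintro ⟨hne, hm1, hm2⟩
    exact ⟨hm1, by simpa [mul_inv_eq_one] using hm2⟩
  · rintro ⟨hm1, rfl⟩
    refine ⟨?_, hm1, by simp⟩
    intro h
    exact hm1 (by rw [show u1 = v1 from congrArg Prod.fst h]; simpa using H.one_mem)

lemma aux_adj2_iff (u1 u2 v1 v2 : G) :
    (Gamma2 G H).Adj (u1, u2) (v1, v2) ↔ (u1 = v1 ∧ u2 * v2⁻¹ ∉ H) := by
  constructor
  · rintro ⟨hne, hm1, hm2⟩
    exact ⟨by simpa [mul_inv_eq_one] using hm1, hm2⟩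
  · rintro ⟨rfl, hm2⟩
    refine ⟨?_, by simp, hm2⟩
    intro h
    exact hm2 (by rw [show u2 = v2 from congrArg Prod.snd h]; simpa using H.one_mem)

lemma aux_adj3_iff (u1 u2 v1 v2 : G) :
    (Gamma3 G H).Adj (u1, u2) (v1, v2) ↔ (u1 * v1⁻¹ ∉ H ∧ u2 * v2⁻¹ = u1 * v1⁻¹) := by
  constructor
  · rintro ⟨hne, hm1, hm2⟩
    exact ⟨hm1, hm2⟩
  · rintro ⟨hm1, hm2⟩
    refine ⟨?_, hm1, hm2⟩
    intro h
    exact hm1 (by rw [show u1 = v1 from congrArg Prod.fst h]; simpa using H.one_mem)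

lemma aux_adj1_eq : (Gamma1 G H).adjMatrix ℂ = Mmat H ⊗ₖ (1 : Matrix G G ℂ) := by
  ext ⟨u1, u2⟩ ⟨v1, v2⟩
  rw [SimpleGraph.adjMatrix_apply]
  by_cases h1 : u1 * v1⁻¹ ∈ H <;> by_cases h2 : u2 = v2 <;>
    simp [aux_adj1_iff, h1, h2, Mmat, Jmat, Bmat, Matrix.one_apply]

lemma aux_adj1_cubic :
    (((Gamma1 G H).adjMatrix ℂ) - ((Fintype.card G : ℂ) - (Fintype.card H : ℂ)) • 1) *
      (((Gamma1 G H).adjMatrix ℂ) *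
        (((Gamma1 G H).adjMatrix ℂ) + (Fintype.card H : ℂ) • 1)) = 0 := by
  rw [aux_adj1_eq]
  have h1 : (1 : Matrix (G × G) (G × G) ℂ) = (1 : Matrix G G ℂ) ⊗ₖ (1 : Matrix G G ℂ) :=
    (Matrix.one_kronecker_one).symm
  rw [h1, ← Matrix.smul_kronecker, ← Matrix.smul_kronecker, ← aux_sub_kron,
    ← Matrix.add_kronecker, ← Matrix.mul_kronecker_mul, ← Matrix.mul_kronecker_mul,
    Matrix.mul_one, Matrix.mul_one, aux_M_cubic, Matrix.zero_kronecker]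

lemma aux_adj2_eq : (Gamma2 G H).adjMatrix ℂ =
    ((Gamma1 G H).adjMatrix ℂ).submatrix (Equiv.prodComm G G) (Equiv.prodComm G G) := by
  ext ⟨u1, u2⟩ ⟨v1, v2⟩
  simp only [Matrix.submatrix_apply, Equiv.prodComm_apply, Prod.swap_prod_mk,
    SimpleGraph.adjMatrix_apply, aux_adj1_iff, aux_adj2_iff]
  exact if_congr and_comm rfl rfl

/-- The shear equivalence relating `Γ₃` to `Γ₁`. -/
def aux_shear (G : Type*) [Group G] : G × G ≃ G × G where
  toFun p := (p.1, p.1⁻¹ * p.2)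
  invFun p := (p.1, p.1 * p.2)
  left_inv p := by simp
  right_inv p := by simp

lemma aux_adj3_eq : (Gamma3 G H).adjMatrix ℂ =
    ((Gamma1 G H).adjMatrix ℂ).submatrix (aux_shear G) (aux_shear G) := by
  ext ⟨u1, u2⟩ ⟨v1, v2⟩
  simp only [Matrix.submatrix_apply, aux_shear, Equiv.coe_fn_mk,
    SimpleGraph.adjMatrix_apply, aux_adj1_iff, aux_adj3_iff]
  have key : u2 * v2⁻¹ = u1 * v1⁻¹ ↔ u1⁻¹ * u2 = v1⁻¹ * v2 := by
    constructor
    · intro h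
      have := congrArg (fun x => u1⁻¹ * x * v2) h
      simpa [mul_assoc] using this
    · intro h
      have := congrArg (fun x => u1 * x * v2⁻¹) h
      simpa [mul_assoc] using this
  rw [key]

/-- Cubic identities transfer along `submatrix` by an equivalence. -/
lemma aux_submatrix_cubic {ι : Type*} [Fintype ι] [DecidableEq ι] (A : Matrix ι ι ℂ)
    (e : ι ≃ ι) (a c : ℂ) (hA : (A - a • 1) * (A * (A + c • 1)) = 0) :
    ((A.submatrix e e) - a • 1) * ((A.submatrix e e) * ((A.submatrix e e) + c • 1)) = 0 := by
  have e1 : (A - a • 1).submatrix e e = A.submatrix e e - a • 1 := by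
    have h : (A - a • 1).submatrix e e
        = A.submatrix e e - a • (1 : Matrix ι ι ℂ).submatrix e e := rfl
    rw [h, Matrix.submatrix_one_equiv]
  have e2 : (A + c • 1).submatrix e e = A.submatrix e e + c • 1 := by
    have h : (A + c • 1).submatrix e e
        = A.submatrix e e + c • (1 : Matrix ι ι ℂ).submatrix e e := rfl
    rw [h, Matrix.submatrix_one_equiv]
  calc (A.submatrix e e - a • 1) * (A.submatrix e e * (A.submatrix e e + c • 1))
      = (A - a • 1).submatrix e e * (A.submatrix e e * (A + c • 1).submatrix e e) := by
        rw [e1, e2]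
    _ = ((A - a • 1) * (A * (A + c • 1))).submatrix e e := by
        rw [Matrix.submatrix_mul_equiv, Matrix.submatrix_mul_equiv]
    _ = 0 := by rw [hA]; rfl

end Aux

/-- For a proper subgroup `H` of a finite group `G`, each of the Cayley
graphs `Cay(G × G, S_H^(1))`, `Cay(G × G, S_H^(2))`, `Cay(G × G, S_H^(3))` is integral:
every complex eigenvalue of its adjacency matrix is an integer. -/
theorem three_graphs_integral (G : Type*) [Group G] [Fintype G] (H : Subgroup G) (hH : H ≠ ⊤) :
    (∀ z : ℂ, ((Gamma1 G H).adjMatrix ℂ).charpoly.IsRoot z → ∃ m : ℤ, z = (m : ℂ)) ∧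
    (∀ z : ℂ, ((Gamma2 G H).adjMatrix ℂ).charpoly.IsRoot z → ∃ m : ℤ, z = (m : ℂ)) ∧
    (∀ z : ℂ, ((Gamma3 G H).adjMatrix ℂ).charpoly.IsRoot z → ∃ m : ℤ, z = (m : ℂ)) := by
  set a : ℂ := (Fintype.card G : ℂ) - (Fintype.card H : ℂ) with ha
  set c : ℂ := (Fintype.card H : ℂ) with hc
  have hconc : ∀ z : ℂ, (z = a ∨ z = 0 ∨ z = -c) → ∃ m : ℤ, z = (m : ℂ) := by
    rintro z (rfl | rfl | rfl)
    · exact ⟨(Fintype.card G : ℤ) - (Fintype.card H : ℤ), by push_cast [ha]; ring⟩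
    · exact ⟨0, by simp⟩
    · exact ⟨-(Fintype.card H : ℤ), by push_cast [hc]; ring⟩
  refine ⟨?_, ?_, ?_⟩
  · intro z hz
    exact hconc z (aux_cubic_root _ a c (aux_adj1_cubic H) z hz)
  · intro z hz
    rw [aux_adj2_eq] at hz
    exact hconc z (aux_cubic_root _ a c
      (aux_submatrix_cubic _ _ a c (aux_adj1_cubic H)) z hz)
  · intro z hz
    rw [aux_adj3_eq] at hz
    exact hconc z (aux_cubic_root _ a c
      (aux_submatrix_cubic _ _ a c (aux_adj1_cubic H)) z hz)
end
end

section
/- Let G be a finite group of order n and H a proper nontrivial subgroup of G with [G : H] = ℓ. Then |G| − |H| and |G| − 3|H| are eigenvalues of the adjacency matrix of Γ_H(G); moreover the multiplicity of |G| − 3|H| as a root of the characteristic polynomial of the adjacency matrix is at least 2(ℓ − 1), and the multiplicity of |G| − |H| is at least 2(n − ℓ). -/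
open Finset Polynomial Module
open scoped Classical

noncomputable section

/-! ### Auxiliary general linear algebra lemmas -/

set_option linter.unusedSectionVars false

lemma aux_charpoly_mulVecLin {m : Type*} [Fintype m] [DecidableEq m] (M : Matrix m m ℂ) :
    (M.mulVecLin).charpoly = M.charpoly := by
  have h := LinearMap.charpoly_toMatrix (M.mulVecLin) (Pi.basisFun ℂ m)
  rw [LinearMap.toMatrix_eq_toMatrix'] at h
  rw [← h, ← Matrix.toLin'_apply' M, LinearMap.toMatrix'_toLin']

lemma aux_charpoly_shift {m : Type*} [Fintype m] [DecidableEq m] (A : Matrix m m ℂ) (μ : ℂ) :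
    A.charpoly.comp (X + C μ) = (A - μ • 1).charpoly := by
  have h : (A.charpoly).comp (X + C μ)
      = ((Polynomial.eval₂RingHom (C : ℂ →+* ℂ[X]) (X + C μ))) A.charpoly := rfl
  rw [h, Matrix.charpoly, RingHom.map_det, Matrix.charpoly]
  congr 1
  ext i j
  by_cases hij : i = j
  · subst hij
    simp [Matrix.charmatrix_apply_eq, Matrix.one_apply, mul_comm]
    ring
  · simp [Matrix.charmatrix_apply_ne _ _ _ hij, Matrix.one_apply, hij]

lemma aux_finrank_ker_le_rootMultiplicity {m : Type*} [Fintype m] [DecidableEq m]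
    (A : Matrix m m ℂ) (μ : ℂ) :
    finrank ℂ (LinearMap.ker ((A - μ • 1).mulVecLin)) ≤ A.charpoly.rootMultiplicity μ := by
  rw [Polynomial.rootMultiplicity_eq_natTrailingDegree, aux_charpoly_shift,
    ← aux_charpoly_mulVecLin, ← LinearMap.finrank_maxGenEigenspace_zero_eq]
  refine Submodule.finrank_mono ?_
  intro x hx
  rw [Module.End.mem_maxGenEigenspace]
  exact ⟨1, by simpa using hx⟩

lemma aux_sum_ite_const {ι : Type*} [Fintype ι] (p : ι → Prop) (a : ℂ) :
    ∑ i : ι, (if p i then a else 0) = a * ∑ i : ι, (if p i then (1 : ℂ) else 0) := by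
  rw [Finset.mul_sum]
  exact Finset.sum_congr rfl fun i _ => by split <;> simp

/-- sum functional on a finite index type -/
def sumF (ι : Type*) [Fintype ι] : (ι → ℂ) →ₗ[ℂ] ℂ where
  toFun φ := ∑ z : ι, φ z
  map_add' φ ψ := by simp [Finset.sum_add_distrib]
  map_smul' c φ := by simp [Finset.mul_sum]

lemma aux_finrank_ker_sumF (ι : Type*) [Fintype ι] [Nonempty ι] :
    finrank ℂ (LinearMap.ker (sumF ι)) + 1 = Fintype.card ι := by
  have hsurj : Function.Surjective (sumF ι) := by
    intro c
    refine ⟨fun _ => c / (Fintype.card ι : ℂ), ?_⟩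
    have hcar : (Fintype.card ι : ℂ) ≠ 0 := by
      exact_mod_cast Fintype.card_ne_zero
    simp only [sumF, LinearMap.coe_mk, AddHom.coe_mk, Finset.sum_const, Finset.card_univ,
      nsmul_eq_mul]
    field_simp
  have h := LinearMap.finrank_range_add_finrank_ker (sumF ι)
  rw [LinearMap.range_eq_top.mpr hsurj, finrank_top, Module.finrank_self,
    Module.finrank_pi] at h
  omega

/-! ### Class sums for right cosets -/

section AuxG
variable {G : Type*} [Group G] [Fintype G] (H : Subgroup G)

local notation "QH" => Quotient (QuotientGroup.rightRel H)

lemma mem_class_iff (x z : G) :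
    (Quotient.mk'' z : QH) = Quotient.mk'' x ↔ x * z⁻¹ ∈ H := by
  rw [Quotient.eq'']
  exact QuotientGroup.rightRel_apply

lemma counting (x : G) :
    ∑ z : G, (if x * z⁻¹ ∈ H then (1 : ℂ) else 0) = (Nat.card H : ℂ) := by
  rw [Fintype.sum_equiv ((Equiv.inv G).trans (Equiv.mulLeft x))
    (fun z => if x * z⁻¹ ∈ H then (1 : ℂ) else 0)
    (fun w => if w ∈ H then (1 : ℂ) else 0) (fun z => rfl)]
  rw [Finset.sum_boole]
  rw [Nat.card_eq_fintype_card, Fintype.card_subtype]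

lemma class_count (q : QH) :
    ∑ z : G, (if (Quotient.mk'' z : QH) = q then (1 : ℂ) else 0) = (Nat.card H : ℂ) := by
  induction q using Quotient.inductionOn' with
  | h x => simp_rw [mem_class_iff]; exact counting H x

/-- class-sums linear map -/
def classMap : (G → ℂ) →ₗ[ℂ] (QH → ℂ) where
  toFun φ := fun q => ∑ z : G, (if (Quotient.mk'' z : QH) = q then (1 : ℂ) else 0) * φ z
  map_add' φ ψ := by
    funext q; simp [mul_add, Finset.sum_add_distrib]
  map_smul' c φ := by
    funext q
    simp only [Finset.mul_sum, RingHom.id_apply, Pi.smul_apply, smul_eq_mul]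
    exact Finset.sum_congr rfl fun z _ => by ring

lemma classMap_apply (φ : G → ℂ) (x : G) :
    classMap H φ (Quotient.mk'' x) = ∑ z : G, (if x * z⁻¹ ∈ H then φ z else 0) := by
  simp only [classMap, LinearMap.coe_mk, AddHom.coe_mk]
  simp_rw [mem_class_iff]
  exact Finset.sum_congr rfl fun z _ => by split <;> simp

lemma sum_eq_sum_classMap (φ : G → ℂ) :
    ∑ z : G, φ z = ∑ q : QH, classMap H φ q := by
  simp only [classMap, LinearMap.coe_mk, AddHom.coe_mk]
  rw [Finset.sum_comm]
  refine Finset.sum_congr rfl fun z _ => ?_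
  rw [← Finset.sum_mul, Finset.sum_ite_eq, if_pos (Finset.mem_univ _), one_mul]

lemma sum_comp_mk (ψ : QH → ℂ) :
    ∑ z : G, ψ (Quotient.mk'' z) = (Nat.card H : ℂ) * ∑ q : QH, ψ q := by
  calc ∑ z : G, ψ (Quotient.mk'' z)
      = ∑ z : G, ∑ q : QH, (if (Quotient.mk'' z : QH) = q then (1 : ℂ) else 0) * ψ q := by
        refine Finset.sum_congr rfl fun z _ => ?_
        have h : ∀ q : QH, (if (Quotient.mk'' z : QH) = q then (1 : ℂ) else 0) * ψ q
            = if (Quotient.mk'' z : QH) = q then ψ q else 0 := fun q => by split <;> simp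
        rw [Finset.sum_congr rfl fun q _ => h q, Finset.sum_ite_eq,
          if_pos (Finset.mem_univ _)]
    _ = ∑ q : QH, (∑ z : G, if (Quotient.mk'' z : QH) = q then (1 : ℂ) else 0) * ψ q := by
        rw [Finset.sum_comm]
        exact Finset.sum_congr rfl fun q _ => by rw [Finset.sum_mul]
    _ = (Nat.card H : ℂ) * ∑ q : QH, ψ q := by
        simp_rw [class_count]
        rw [← Finset.mul_sum]

lemma card_QH : Fintype.card QH = H.index := by
  rw [Fintype.card_congr (QuotientGroup.quotientRightRelEquivQuotientLeftRel H)]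
  rw [Subgroup.index, Nat.card_eq_fintype_card]

end AuxG

/-! ### Adjacency structure of `Gamma` -/

section GammaLemmas
variable {G : Type*} [Group G] [Fintype G] (H : Subgroup G)

lemma gamma_adj_iff (x y v₁ v₂ : G) : (Gamma G H).Adj (x, y) (v₁, v₂) ↔
    (x * v₁⁻¹ ∉ H ∧ y = v₂) ∨ (x = v₁ ∧ y * v₂⁻¹ ∉ H) ∨
    (x * v₁⁻¹ = y * v₂⁻¹ ∧ x * v₁⁻¹ ∉ H) := by
  have h1 : (1 : G) ∈ H := H.one_mem
  rw [show (Gamma G H).Adj (x, y) (v₁, v₂) ↔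
    ((x, y) ≠ (v₁, v₂) ∧ (x, y) * (v₁, v₂)⁻¹ ∈ SH G H) from Iff.rfl]
  constructor
  · rintro ⟨-, hS⟩
    rcases hS with ⟨g, hg, hp⟩ | ⟨g, hg, hp⟩ | ⟨g, hg, hp⟩ <;>
      rw [Prod.ext_iff] at hp <;>
      simp only [Prod.fst_mul, Prod.snd_mul, Prod.fst_inv, Prod.snd_inv, Prod.mk_mul_mk,
        Prod.fst, Prod.snd] at hp <;>
      obtain ⟨ha, hb⟩ := hp
    · exact Or.inl ⟨ha ▸ hg, by rwa [mul_inv_eq_one] at hb⟩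
    · exact Or.inr (Or.inl ⟨by rwa [mul_inv_eq_one] at ha, hb ▸ hg⟩)
    · exact Or.inr (Or.inr ⟨ha.trans hb.symm, ha ▸ hg⟩)
  · rintro (⟨hg, rfl⟩ | ⟨rfl, hg⟩ | ⟨heq, hg⟩)
    · refine ⟨fun h => ?_, Or.inl ⟨x * v₁⁻¹, hg, by simp [Prod.ext_iff]⟩⟩
      simp only [Prod.mk.injEq] at h
      exact hg (by rw [h.1]; simpa using h1)
    · refine ⟨fun h => ?_, Or.inr (Or.inl ⟨y * v₂⁻¹, hg, by simp [Prod.ext_iff]⟩)⟩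
      simp only [Prod.mk.injEq] at h
      exact hg (by rw [h.2]; simpa using h1)
    · refine ⟨fun h => ?_, Or.inr (Or.inr ⟨x * v₁⁻¹, hg, by
        simp [Prod.ext_iff, heq]⟩)⟩
      simp only [Prod.mk.injEq] at h
      exact hg (by rw [h.1]; simpa using h1)

lemma gamma_adj_swap (u v : G × G) :
    (Gamma G H).Adj u v ↔ (Gamma G H).Adj u.swap v.swap := by
  obtain ⟨x, y⟩ := u; obtain ⟨v₁, v₂⟩ := v
  rw [gamma_adj_iff, Prod.swap_prod_mk, Prod.swap_prod_mk, gamma_adj_iff]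
  constructor
  · rintro (⟨h1, h2⟩ | ⟨h1, h2⟩ | ⟨h1, h2⟩)
    · exact Or.inr (Or.inl ⟨h2, h1⟩)
    · exact Or.inl ⟨h2, h1⟩
    · exact Or.inr (Or.inr ⟨h1.symm, h1 ▸ h2⟩)
  · rintro (⟨h1, h2⟩ | ⟨h1, h2⟩ | ⟨h1, h2⟩)
    · exact Or.inr (Or.inl ⟨h2, h1⟩)
    · exact Or.inl ⟨h2, h1⟩
    · exact Or.inr (Or.inr ⟨h1.symm, h1 ▸ h2⟩)

lemma notin_sum (φ : G → ℂ) (c : ℂ)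
    (h1 : ∀ x, ∑ z : G, (if x * z⁻¹ ∈ H then φ z else 0) = c * φ x)
    (h2 : ∑ z : G, φ z = 0) (x : G) :
    ∑ z : G, (if x * z⁻¹ ∉ H then φ z else 0) = -(c * φ x) := by
  have key : ∀ z : G, (if x * z⁻¹ ∉ H then φ z else 0)
      = φ z - (if x * z⁻¹ ∈ H then φ z else 0) := fun z => by
    by_cases h : x * z⁻¹ ∈ H <;> simp [h]
  rw [Finset.sum_congr rfl fun z _ => key z, Finset.sum_sub_distrib, h1, h2]
  ring

lemma card_notin (y : G) :
    ∑ v : G, (if y * v⁻¹ ∉ H then (1 : ℂ) else 0)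
      = (Fintype.card G : ℂ) - (Nat.card H : ℂ) := by
  have key : ∀ v : G, (if y * v⁻¹ ∉ H then (1 : ℂ) else 0)
      = 1 - (if y * v⁻¹ ∈ H then (1 : ℂ) else 0) := fun v => by
    by_cases h : y * v⁻¹ ∈ H <;> simp [h]
  rw [Finset.sum_congr rfl fun v _ => key v, Finset.sum_sub_distrib, counting]
  simp

lemma mulVec_fst (φ : G → ℂ) (c : ℂ)
    (h1 : ∀ x, ∑ z : G, (if x * z⁻¹ ∈ H then φ z else 0) = c * φ x)
    (h2 : ∑ z : G, φ z = 0) (x y : G) :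
    ((Gamma G H).adjMatrix ℂ).mulVec (fun p => φ p.1) (x, y)
      = ((Fintype.card G : ℂ) - (Nat.card H : ℂ) - 2 * c) * φ x := by
  have hmv : ((Gamma G H).adjMatrix ℂ).mulVec (fun p => φ p.1) (x, y)
      = ∑ v : G × G, (if (Gamma G H).Adj (x, y) v then φ v.1 else 0) := by
    simp [Matrix.mulVec, dotProduct, SimpleGraph.adjMatrix_apply, ite_mul]
  rw [hmv, Fintype.sum_prod_type]
  have split : ∀ v₁ v₂ : G,
      (if (Gamma G H).Adj (x, y) (v₁, v₂) then φ v₁ else 0)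
      = (if x * v₁⁻¹ ∉ H ∧ y = v₂ then φ v₁ else 0)
        + (if x = v₁ ∧ y * v₂⁻¹ ∉ H then φ v₁ else 0)
        + (if x * v₁⁻¹ = y * v₂⁻¹ ∧ x * v₁⁻¹ ∉ H then φ v₁ else 0) := by
    intro v₁ v₂
    rw [if_congr (gamma_adj_iff H x y v₁ v₂) rfl rfl]
    by_cases p1 : x * v₁⁻¹ ∉ H ∧ y = v₂ <;>
      by_cases p2 : x = v₁ ∧ y * v₂⁻¹ ∉ H <;>
      by_cases p3 : x * v₁⁻¹ = y * v₂⁻¹ ∧ x * v₁⁻¹ ∉ H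
    all_goals
      first
      | (exfalso
         obtain ⟨a1, a2⟩ := p1
         first
         | (obtain ⟨b1, b2⟩ := p2
            exact a1 (by rw [b1]; simpa using H.one_mem))
         | (obtain ⟨b1, b2⟩ := p3
            exact b2 (by rw [b1, ← a2]; simpa using H.one_mem)))
      | (exfalso
         obtain ⟨a1, a2⟩ := p2
         obtain ⟨b1, b2⟩ := p3
         exact a2 (by rw [← a1] at b1; rw [← b1]; simpa using H.one_mem))
      | (rw [if_neg (by tauto), if_neg p1, if_neg p2, if_neg p3]; ring)
      | (rw [if_pos (Or.inl p1), if_pos p1, if_neg p2, if_neg p3]; ring)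
      | (rw [if_pos (Or.inr (Or.inl p2)), if_neg p1, if_pos p2, if_neg p3]; ring)
      | (rw [if_pos (Or.inr (Or.inr p3)), if_neg p1, if_neg p2, if_pos p3]; ring)
  rw [Finset.sum_congr rfl fun v₁ _ => Finset.sum_congr rfl fun v₂ _ => split v₁ v₂]
  simp only [Finset.sum_add_distrib]
  have S1 : ∑ v₁ : G, ∑ v₂ : G, (if x * v₁⁻¹ ∉ H ∧ y = v₂ then φ v₁ else 0)
      = -(c * φ x) := by
    have h : ∀ v₁ : G, ∑ v₂ : G, (if x * v₁⁻¹ ∉ H ∧ y = v₂ then φ v₁ else 0)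
        = (if x * v₁⁻¹ ∉ H then φ v₁ else 0) := by
      intro v₁
      by_cases hP : x * v₁⁻¹ ∉ H <;> simp [hP, Finset.sum_ite_eq]
    rw [Finset.sum_congr rfl fun v₁ _ => h v₁]
    exact notin_sum H φ c h1 h2 x
  have S2 : ∑ v₁ : G, ∑ v₂ : G, (if x = v₁ ∧ y * v₂⁻¹ ∉ H then φ v₁ else 0)
      = ((Fintype.card G : ℂ) - (Nat.card H : ℂ)) * φ x := by
    have h : ∀ v₁ : G, ∑ v₂ : G, (if x = v₁ ∧ y * v₂⁻¹ ∉ H then φ v₁ else 0)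
        = (if x = v₁ then ((Fintype.card G : ℂ) - (Nat.card H : ℂ)) * φ v₁ else 0) := by
      intro v₁
      by_cases hP : x = v₁
      · simp only [hP, true_and, if_true]
        have hpull : ∑ v₂ : G, (if y * v₂⁻¹ ∉ H then φ v₁ else 0)
            = φ v₁ * ∑ v₂ : G, (if y * v₂⁻¹ ∉ H then (1 : ℂ) else 0) := by
          rw [Finset.mul_sum]
          exact Finset.sum_congr rfl fun v₂ _ => by split <;> simp
        rw [hpull, card_notin H y]
        ring
      · simp [hP]
    rw [Finset.sum_congr rfl fun v₁ _ => h v₁, Finset.sum_ite_eq, if_pos (Finset.mem_univ _)]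
  have S3 : ∑ v₁ : G, ∑ v₂ : G, (if x * v₁⁻¹ = y * v₂⁻¹ ∧ x * v₁⁻¹ ∉ H then φ v₁ else 0)
      = -(c * φ x) := by
    have h : ∀ v₁ : G, ∑ v₂ : G, (if x * v₁⁻¹ = y * v₂⁻¹ ∧ x * v₁⁻¹ ∉ H then φ v₁ else 0)
        = (if x * v₁⁻¹ ∉ H then φ v₁ else 0) := by
      intro v₁
      have hiff : ∀ v₂ : G, (x * v₁⁻¹ = y * v₂⁻¹ ∧ x * v₁⁻¹ ∉ H)
          ↔ ((x * v₁⁻¹)⁻¹ * y = v₂ ∧ x * v₁⁻¹ ∉ H) := by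
        intro v₂
        constructor
        · rintro ⟨h', h''⟩; exact ⟨by rw [h']; group, h''⟩
        · rintro ⟨h', h''⟩; exact ⟨by rw [← h']; group, h''⟩
      rw [Finset.sum_congr rfl fun v₂ _ => if_congr (hiff v₂) rfl rfl]
      by_cases hP : x * v₁⁻¹ ∉ H <;> simp [hP, Finset.sum_ite_eq]
    rw [Finset.sum_congr rfl fun v₁ _ => h v₁]
    exact notin_sum H φ c h1 h2 x
  rw [S1, S2, S3]
  ring

lemma mulVec_snd (φ : G → ℂ) (c : ℂ)
    (h1 : ∀ x, ∑ z : G, (if x * z⁻¹ ∈ H then φ z else 0) = c * φ x)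
    (h2 : ∑ z : G, φ z = 0) (x y : G) :
    ((Gamma G H).adjMatrix ℂ).mulVec (fun p => φ p.2) (x, y)
      = ((Fintype.card G : ℂ) - (Nat.card H : ℂ) - 2 * c) * φ y := by
  have hmv : ∀ a b : G, ((Gamma G H).adjMatrix ℂ).mulVec (fun p => φ p.2) (a, b)
      = ∑ v : G × G, (if (Gamma G H).Adj (a, b) v then φ v.2 else 0) := by
    intro a b
    simp [Matrix.mulVec, dotProduct, SimpleGraph.adjMatrix_apply, ite_mul]
  have hmv' : ∀ a b : G, ((Gamma G H).adjMatrix ℂ).mulVec (fun p => φ p.1) (a, b)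
      = ∑ v : G × G, (if (Gamma G H).Adj (a, b) v then φ v.1 else 0) := by
    intro a b
    simp [Matrix.mulVec, dotProduct, SimpleGraph.adjMatrix_apply, ite_mul]
  rw [hmv x y, Fintype.sum_equiv (Equiv.prodComm G G)
    (fun v : G × G => if (Gamma G H).Adj (x, y) v then φ v.2 else 0)
    (fun w : G × G => if (Gamma G H).Adj (y, x) w then φ w.1 else 0) ?_]
  · rw [← hmv' y x, mulVec_fst H φ c h1 h2 y x]
  · intro v
    obtain ⟨a, b⟩ := v
    have hsw : (Gamma G H).Adj (x, y) (a, b) ↔ (Gamma G H).Adj (y, x) (b, a) := by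
      simpa using gamma_adj_swap H (x, y) (a, b)
    simp only [Equiv.prodComm_apply, Prod.swap_prod_mk]
    exact if_congr hsw rfl rfl

end GammaLemmas

section Assembly
variable {G : Type*} [Group G] [Fintype G] (H : Subgroup G)

local notation "QH" => Quotient (QuotientGroup.rightRel H)

lemma mult_bound (c : ℂ) (U : Submodule ℂ (G → ℂ))
    (hcond : ∀ φ ∈ U, (∀ x, ∑ z : G, (if x * z⁻¹ ∈ H then φ z else 0) = c * φ x)
      ∧ ∑ z : G, φ z = 0) :
    2 * finrank ℂ U ≤ (((Gamma G H).adjMatrix ℂ).charpoly).rootMultiplicity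
      ((Fintype.card G : ℂ) - (Nat.card H : ℂ) - 2 * c) := by
  set μ : ℂ := (Fintype.card G : ℂ) - (Nat.card H : ℂ) - 2 * c with hμ
  refine le_trans ?_ (aux_finrank_ker_le_rootMultiplicity ((Gamma G H).adjMatrix ℂ) μ)
  set A := (Gamma G H).adjMatrix ℂ with hA
  set K := LinearMap.ker ((A - μ • 1).mulVecLin) with hK
  set L₁ : (G → ℂ) →ₗ[ℂ] (G × G → ℂ) := LinearMap.funLeft ℂ ℂ Prod.fst with hL₁
  set L₂ : (G → ℂ) →ₗ[ℂ] (G × G → ℂ) := LinearMap.funLeft ℂ ℂ Prod.snd with hL₂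
  have hL₁inj : Function.Injective L₁ :=
    LinearMap.funLeft_injective_of_surjective ℂ ℂ _ (fun x => ⟨(x, 1), rfl⟩)
  have hL₂inj : Function.Injective L₂ :=
    LinearMap.funLeft_injective_of_surjective ℂ ℂ _ (fun x => ⟨(1, x), rfl⟩)
  have hker : ∀ φ ∈ U, L₁ φ ∈ K ∧ L₂ φ ∈ K := by
    intro φ hφ
    obtain ⟨h1, h2⟩ := hcond φ hφ
    constructor
    · rw [LinearMap.mem_ker, Matrix.mulVecLin_apply, Matrix.sub_mulVec,
        Matrix.smul_mulVec, Matrix.one_mulVec]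
      have hLφ : (L₁ φ : G × G → ℂ) = fun p => φ p.1 := rfl
      rw [hLφ]
      funext p
      obtain ⟨x, y⟩ := p
      simp only [Pi.sub_apply, Pi.smul_apply, smul_eq_mul, Pi.zero_apply]
      rw [mulVec_fst H φ c h1 h2 x y]
      ring
    · rw [LinearMap.mem_ker, Matrix.mulVecLin_apply, Matrix.sub_mulVec,
        Matrix.smul_mulVec, Matrix.one_mulVec]
      have hLφ : (L₂ φ : G × G → ℂ) = fun p => φ p.2 := rfl
      rw [hLφ]
      funext p
      obtain ⟨x, y⟩ := p
      simp only [Pi.sub_apply, Pi.smul_apply, smul_eq_mul, Pi.zero_apply]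
      rw [mulVec_snd H φ c h1 h2 x y]
      ring
  have hsub : (U.map L₁) ⊔ (U.map L₂) ≤ K :=
    sup_le (Submodule.map_le_iff_le_comap.mpr fun φ hφ => (hker φ hφ).1)
      (Submodule.map_le_iff_le_comap.mpr fun φ hφ => (hker φ hφ).2)
  have hcardG : (Fintype.card G : ℂ) ≠ 0 := by exact_mod_cast Fintype.card_ne_zero
  have hinf : (U.map L₁) ⊓ (U.map L₂) = ⊥ := by
    rw [eq_bot_iff]
    rintro f ⟨hf₁, hf₂⟩
    obtain ⟨φ, hφU, hfφ⟩ := hf₁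
    obtain ⟨ψ, hψU, hfψ⟩ := hf₂
    have hsum := (hcond φ hφU).2
    have hφconst : ∀ x : G, φ x = ψ 1 := by
      intro x
      have e1 : φ x = f (x, 1) := by rw [← hfφ]; rfl
      have e2 : ψ 1 = f (x, 1) := by rw [← hfψ]; rfl
      rw [e1, e2]
    have h0 : ψ 1 = 0 := by
      have hs : ∑ z : G, φ z = ∑ _z : G, ψ 1 := Finset.sum_congr rfl fun z _ => hφconst z
      rw [hsum, Finset.sum_const, Finset.card_univ, nsmul_eq_mul] at hs
      exact (mul_eq_zero.mp hs.symm).resolve_left hcardG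
    have hφ0 : φ = 0 := funext fun x => by rw [hφconst x, h0]; rfl
    rw [Submodule.mem_bot, ← hfφ, hφ0, map_zero]
  have hfr : finrank ℂ ↥((U.map L₁) ⊔ (U.map L₂)) = 2 * finrank ℂ U := by
    have hadd := Submodule.finrank_sup_add_finrank_inf_eq (U.map L₁) (U.map L₂)
    rw [hinf, finrank_bot, add_zero] at hadd
    have e1 := (Submodule.equivMapOfInjective L₁ hL₁inj U).finrank_eq
    have e2 := (Submodule.equivMapOfInjective L₂ hL₂inj U).finrank_eq
    omega
  rw [← hfr]
  exact Submodule.finrank_mono hsub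

lemma classMap_surjective : Function.Surjective (classMap H) := by
  have hk : (Nat.card H : ℂ) ≠ 0 := by
    have := Nat.card_pos (α := H)
    exact_mod_cast this.ne'
  intro ψ
  refine ⟨fun z => ψ (Quotient.mk'' z) / (Nat.card H : ℂ), ?_⟩
  funext q
  induction q using Quotient.inductionOn' with
  | h x =>
    rw [classMap_apply]
    have hre : ∀ z : G, (if x * z⁻¹ ∈ H then ψ (Quotient.mk'' z) / (Nat.card H : ℂ) else 0)
        = (if x * z⁻¹ ∈ H then (1 : ℂ) else 0) * (ψ (Quotient.mk'' x) / (Nat.card H : ℂ)) := by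
      intro z
      by_cases h : x * z⁻¹ ∈ H
      · rw [if_pos h, if_pos h, one_mul, congrArg ψ ((mem_class_iff H x z).mpr h)]
      · rw [if_neg h, if_neg h, zero_mul]
    rw [Finset.sum_congr rfl fun z _ => hre z, ← Finset.sum_mul, counting]
    field_simp

lemma finrank_ker_classMap : finrank ℂ (LinearMap.ker (classMap H)) + H.index
    = Fintype.card G := by
  have h := LinearMap.finrank_range_add_finrank_ker (classMap H)
  rw [LinearMap.range_eq_top.mpr (classMap_surjective H), finrank_top,
    Module.finrank_pi, Module.finrank_pi, card_QH] at h
  omega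

lemma ker_classMap_cond : ∀ φ ∈ LinearMap.ker (classMap H),
    (∀ x, ∑ z : G, (if x * z⁻¹ ∈ H then φ z else 0) = (0 : ℂ) * φ x)
      ∧ ∑ z : G, φ z = 0 := by
  intro φ hφ
  rw [LinearMap.mem_ker] at hφ
  constructor
  · intro x
    rw [← classMap_apply, hφ, zero_mul]
    rfl
  · rw [sum_eq_sum_classMap, hφ]
    simp

lemma finrank_U2 : ∃ U : Submodule ℂ (G → ℂ),
    finrank ℂ U + 1 = H.index ∧
    ∀ φ ∈ U, (∀ x, ∑ z : G, (if x * z⁻¹ ∈ H then φ z else 0) = (Nat.card H : ℂ) * φ x)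
      ∧ ∑ z : G, φ z = 0 := by
  have : Nonempty QH := ⟨Quotient.mk'' 1⟩
  have hmk : Function.Surjective (Quotient.mk'' : G → QH) :=
    fun q => Quotient.inductionOn' q fun x => ⟨x, rfl⟩
  set P : (QH → ℂ) →ₗ[ℂ] (G → ℂ) := LinearMap.funLeft ℂ ℂ (Quotient.mk'' : G → QH) with hP
  have hPinj : Function.Injective P :=
    LinearMap.funLeft_injective_of_surjective ℂ ℂ _ hmk
  refine ⟨(LinearMap.ker (sumF QH)).map P, ?_, ?_⟩
  · rw [← (Submodule.equivMapOfInjective P hPinj _).finrank_eq]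
    rw [aux_finrank_ker_sumF QH, card_QH]
  · rintro φ ⟨ψ, hψ, rfl⟩
    have hψ0 : ∑ q : QH, ψ q = 0 := hψ
    have hPψ : (P ψ : G → ℂ) = fun z => ψ (Quotient.mk'' z) := rfl
    rw [hPψ]
    constructor
    · intro x
      have hre : ∀ z : G, (if x * z⁻¹ ∈ H then ψ (Quotient.mk'' z) else 0)
          = (if x * z⁻¹ ∈ H then (1 : ℂ) else 0) * ψ (Quotient.mk'' x) := by
        intro z
        by_cases h : x * z⁻¹ ∈ H
        · rw [if_pos h, if_pos h, one_mul, congrArg ψ ((mem_class_iff H x z).mpr h)]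
        · rw [if_neg h, if_neg h, zero_mul]
      rw [Finset.sum_congr rfl fun z _ => hre z, ← Finset.sum_mul, counting]
    · rw [sum_comp_mk, hψ0, mul_zero]

end Assembly

/-- For a proper nontrivial subgroup `H` of a finite group `G` of order `n`
with `[G : H] = ℓ`, both `|G| - |H|` and `|G| - 3|H|` are eigenvalues of `Γ_H(G)`;
moreover `m(|G| - 3|H|) ≥ 2(ℓ - 1)` and `m(|G| - |H|) ≥ 2(n - ℓ)`. -/
theorem eigenvalues_and_multiplicity_bounds (G : Type*) [Group G] [Fintype G]
    (H : Subgroup G) (hbot : H ≠ ⊥) (htop : H ≠ ⊤) :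
    (((Gamma G H).adjMatrix ℂ).charpoly).IsRoot
        ((Fintype.card G : ℂ) - (Nat.card H : ℂ)) ∧
    (((Gamma G H).adjMatrix ℂ).charpoly).IsRoot
        ((Fintype.card G : ℂ) - 3 * (Nat.card H : ℂ)) ∧
    2 * (H.index - 1) ≤
      (((Gamma G H).adjMatrix ℂ).charpoly).rootMultiplicity
        ((Fintype.card G : ℂ) - 3 * (Nat.card H : ℂ)) ∧
    2 * (Fintype.card G - H.index) ≤
      (((Gamma G H).adjMatrix ℂ).charpoly).rootMultiplicity
        ((Fintype.card G : ℂ) - (Nat.card H : ℂ)) := by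
  have hk1 : 1 ≤ Nat.card H := Nat.card_pos
  have hkne : Nat.card H ≠ 1 := fun h => hbot (Subgroup.card_eq_one.mp h)
  have hk2 : 2 ≤ Nat.card H := by omega
  have hl0 : H.index ≠ 0 := Subgroup.index_ne_zero_of_finite
  have hlne : H.index ≠ 1 := fun h => htop (Subgroup.index_eq_one.mp h)
  have hl2 : 2 ≤ H.index := by omega
  have hn : Nat.card H * H.index = Fintype.card G := by
    rw [← Nat.card_eq_fintype_card]
    exact Subgroup.card_mul_index H
  have hln : 2 * H.index ≤ Fintype.card G := by
    calc 2 * H.index ≤ Nat.card H * H.index := Nat.mul_le_mul_right _ hk2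
      _ = Fintype.card G := hn
  obtain ⟨U₂, hU₂rank, hU₂cond⟩ := finrank_U2 H
  have hb2 := mult_bound H (Nat.card H : ℂ) U₂ hU₂cond
  rw [show (Fintype.card G : ℂ) - (Nat.card H : ℂ) - 2 * (Nat.card H : ℂ)
      = (Fintype.card G : ℂ) - 3 * (Nat.card H : ℂ) from by ring] at hb2
  have hb1 := mult_bound H 0 (LinearMap.ker (classMap H)) (ker_classMap_cond H)
  rw [show (Fintype.card G : ℂ) - (Nat.card H : ℂ) - 2 * 0
      = (Fintype.card G : ℂ) - (Nat.card H : ℂ) from by ring] at hb1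
  have hrank1 := finrank_ker_classMap H
  have hr2 : 2 * (H.index - 1) ≤
      (((Gamma G H).adjMatrix ℂ).charpoly).rootMultiplicity
        ((Fintype.card G : ℂ) - 3 * (Nat.card H : ℂ)) := by
    have h : finrank ℂ U₂ = H.index - 1 := by omega
    rw [← h]
    exact hb2
  have hr1 : 2 * (Fintype.card G - H.index) ≤
      (((Gamma G H).adjMatrix ℂ).charpoly).rootMultiplicity
        ((Fintype.card G : ℂ) - (Nat.card H : ℂ)) := by
    have h : finrank ℂ (LinearMap.ker (classMap H)) = Fintype.card G - H.index := by omega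
    rw [← h]
    exact hb1
  have hch : (((Gamma G H).adjMatrix ℂ).charpoly) ≠ 0 :=
    (Matrix.charpoly_monic _).ne_zero
  refine ⟨?_, ?_, hr2, hr1⟩
  · exact (Polynomial.rootMultiplicity_pos hch).mp (lt_of_lt_of_le (by omega) hr1)
  · exact (Polynomial.rootMultiplicity_pos hch).mp (lt_of_lt_of_le (by omega) hr2)
end
end

section
/- Let G be a finite group and H a proper subgroup of G with |H| > 2. Then 0 is an eigenvalue of the adjacency matrix of Γ_H(G), i.e., Γ_H(G) is singular. -/
open Finset Polynomial Module
open scoped Classical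

noncomputable section

section Auxiliary

variable {G : Type*} [Group G] [Fintype G] {H : Subgroup G}

omit [Fintype G] in
lemma mem_SH_iff (H : Subgroup G) (p : G × G) :
    p ∈ SH G H ↔ (p.1 ∉ H ∧ p.2 = 1) ∨ (p.1 = 1 ∧ p.2 ∉ H) ∨ (p.1 = p.2 ∧ p.1 ∉ H) := by
  constructor
  · rintro (⟨g, hg, rfl⟩ | ⟨g, hg, rfl⟩ | ⟨g, hg, rfl⟩) <;> simp [hg]
  · obtain ⟨p1, p2⟩ := p
    rintro (⟨h1, rfl⟩ | ⟨rfl, h2⟩ | ⟨heq, h⟩)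
    · exact Or.inl ⟨p1, h1, rfl⟩
    · exact Or.inr (Or.inl ⟨p2, h2, rfl⟩)
    · exact Or.inr (Or.inr ⟨p1, h, Prod.ext rfl heq.symm⟩)

omit [Fintype G] in
lemma adj_iff (H : Subgroup G) (u v : G × G) :
    (Gamma G H).Adj u v ↔ (u.1 * v.1⁻¹ ∉ H ∧ u.2 = v.2) ∨ (u.1 = v.1 ∧ u.2 * v.2⁻¹ ∉ H) ∨
      (u.1 * v.1⁻¹ = u.2 * v.2⁻¹ ∧ u.1 * v.1⁻¹ ∉ H) := by
  show (u ≠ v ∧ u * v⁻¹ ∈ SH G H) ↔ _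
  rw [mem_SH_iff]
  have e1 : (u * v⁻¹).1 = u.1 * v.1⁻¹ := rfl
  have e2 : (u * v⁻¹).2 = u.2 * v.2⁻¹ := rfl
  rw [e1, e2]
  constructor
  · rintro ⟨hne, h⟩
    simpa only [mul_inv_eq_one] using h
  · intro h
    constructor
    · rintro rfl
      simp only [mul_inv_cancel] at h
      rcases h with ⟨h, -⟩ | ⟨-, h⟩ | ⟨-, h⟩ <;> exact h H.one_mem
    · simpa only [mul_inv_eq_one] using h

omit [Fintype G] in
lemma aux_iff (a d c : G) : (a * c = d) ↔ (c = a⁻¹ * d) := by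
  constructor
  · intro h; rw [← h, inv_mul_cancel_left]
  · rintro rfl; rw [mul_inv_cancel_left]

/-- Kernel criterion: a function supported on `H × H` with vanishing row sums, column
sums, and twisted diagonal sums lies in the kernel of the adjacency matrix. -/
lemma kernel_lemma (f : G × G → ℂ)
    (hsupp1 : ∀ p : G × G, p.1 ∉ H → f p = 0)
    (hsupp2 : ∀ p : G × G, p.2 ∉ H → f p = 0)
    (hrow : ∀ x : G, ∑ y : G, f (x, y) = 0)
    (hcol : ∀ y : G, ∑ x : G, f (x, y) = 0)
    (hdiag : ∀ c : G, ∑ h : G, f (h, h * c) = 0) :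
    ((Gamma G H).adjMatrix ℂ).mulVec f = 0 := by
  funext u
  obtain ⟨x, y⟩ := u
  simp only [Matrix.mulVec, dotProduct, Pi.zero_apply]
  have hsplit : ∀ v : G × G, (Gamma G H).adjMatrix ℂ (x, y) v * f v =
      (if x * v.1⁻¹ ∉ H ∧ v.2 = y then f v else 0)
      + (if v.1 = x ∧ y * v.2⁻¹ ∉ H then f v else 0)
      + (if x * v.1⁻¹ = y * v.2⁻¹ ∧ x * v.1⁻¹ ∉ H then f v else 0) := by
    intro v
    rw [SimpleGraph.adjMatrix_apply]
    by_cases h1 : x * v.1⁻¹ ∉ H ∧ v.2 = y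
    · have h2 : ¬ (v.1 = x ∧ y * v.2⁻¹ ∉ H) := by
        rintro ⟨-, h2⟩; rw [h1.2] at h2; exact h2 (by simpa using H.one_mem)
      have h3 : ¬ (x * v.1⁻¹ = y * v.2⁻¹ ∧ x * v.1⁻¹ ∉ H) := by
        rintro ⟨h3, h3'⟩
        rw [h1.2] at h3; simp only [mul_inv_cancel] at h3
        exact h3' (h3 ▸ H.one_mem)
      have hadj : (Gamma G H).Adj (x, y) v := by
        rw [adj_iff]; exact Or.inl ⟨h1.1, h1.2.symm⟩
      rw [if_pos hadj, if_pos h1, if_neg h2, if_neg h3]; ring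
    · by_cases h2 : v.1 = x ∧ y * v.2⁻¹ ∉ H
      · have h3 : ¬ (x * v.1⁻¹ = y * v.2⁻¹ ∧ x * v.1⁻¹ ∉ H) := by
          rintro ⟨-, h3⟩; rw [h2.1] at h3
          simp only [mul_inv_cancel] at h3; exact h3 H.one_mem
        have hadj : (Gamma G H).Adj (x, y) v := by
          rw [adj_iff]; exact Or.inr (Or.inl ⟨h2.1.symm, h2.2⟩)
        rw [if_pos hadj, if_neg h1, if_pos h2, if_neg h3]; ring
      · by_cases h3 : x * v.1⁻¹ = y * v.2⁻¹ ∧ x * v.1⁻¹ ∉ H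
        · have hadj : (Gamma G H).Adj (x, y) v := by
            rw [adj_iff]; exact Or.inr (Or.inr h3)
          rw [if_pos hadj, if_neg h1, if_neg h2, if_pos h3]; ring
        · have hadj : ¬ (Gamma G H).Adj (x, y) v := by
            rw [adj_iff]
            rintro (h | h | h)
            · exact h1 ⟨h.1, h.2.symm⟩
            · exact h2 ⟨h.1.symm, h.2⟩
            · exact h3 h
          rw [if_neg hadj, if_neg h1, if_neg h2, if_neg h3]; ring
  rw [Finset.sum_congr rfl fun v _ => hsplit v, Finset.sum_add_distrib, Finset.sum_add_distrib]
  have S1 : ∑ v : G × G, (if x * v.1⁻¹ ∉ H ∧ v.2 = y then f v else 0) = 0 := by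
    rw [Fintype.sum_prod_type]
    have inner : ∀ a : G, (∑ b : G, if x * a⁻¹ ∉ H ∧ b = y then f (a, b) else 0)
        = (if x ∉ H then f (a, y) else 0) := by
      intro a
      have col : (∑ b : G, if x * a⁻¹ ∉ H ∧ b = y then f (a, b) else 0)
          = (if x * a⁻¹ ∉ H then f (a, y) else 0) := by
        simp only [ite_and]
        by_cases hxa : x * a⁻¹ ∉ H
        · simp only [if_pos hxa, Finset.sum_ite_eq' Finset.univ y (fun b => f (a, b)),
            Finset.mem_univ, if_pos]
        · simp [hxa]
      rw [col]
      by_cases hx : x ∈ H <;> by_cases hxa : x * a⁻¹ ∈ H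
      · simp [hx, hxa]
      · have ha : a ∉ H := fun ha => hxa (H.mul_mem hx (H.inv_mem ha))
        simp [hx, hxa, hsupp1 (a, y) ha]
      · have ha : a ∉ H := fun ha => hx (by simpa using H.mul_mem hxa ha)
        simp [hx, hxa, hsupp1 (a, y) ha]
      · simp [hx, hxa]
    rw [Finset.sum_congr rfl fun a _ => inner a]
    by_cases hx : x ∉ H <;> simp [hx, hcol y]
  have S2 : ∑ v : G × G, (if v.1 = x ∧ y * v.2⁻¹ ∉ H then f v else 0) = 0 := by
    rw [Fintype.sum_prod_type, Finset.sum_comm]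
    have inner : ∀ b : G, (∑ a : G, if a = x ∧ y * b⁻¹ ∉ H then f (a, b) else 0)
        = (if y ∉ H then f (x, b) else 0) := by
      intro b
      have row : (∑ a : G, if a = x ∧ y * b⁻¹ ∉ H then f (a, b) else 0)
          = (if y * b⁻¹ ∉ H then f (x, b) else 0) := by
        have e : ∀ a : G, (if a = x ∧ y * b⁻¹ ∉ H then f (a, b) else 0)
            = (if a = x then (if y * b⁻¹ ∉ H then f (a, b) else 0) else 0) := by
          intro a; by_cases h : a = x <;> by_cases h' : y * b⁻¹ ∉ H <;> simp [h, h']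
        rw [Finset.sum_congr rfl fun a _ => e a,
          Finset.sum_ite_eq' Finset.univ x (fun a => if y * b⁻¹ ∉ H then f (a, b) else 0)]
        simp
      rw [row]
      by_cases hy : y ∈ H <;> by_cases hyb : y * b⁻¹ ∈ H
      · simp [hy, hyb]
      · have hb : b ∉ H := fun hb => hyb (H.mul_mem hy (H.inv_mem hb))
        simp [hy, hyb, hsupp2 (x, b) hb]
      · have hb : b ∉ H := fun hb => hy (by simpa using H.mul_mem hyb hb)
        simp [hy, hyb, hsupp2 (x, b) hb]
      · simp [hy, hyb]
    rw [Finset.sum_congr rfl fun b _ => inner b]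
    by_cases hy : y ∉ H <;> simp [hy, hrow x]
  have S3 : ∑ v : G × G, (if x * v.1⁻¹ = y * v.2⁻¹ ∧ x * v.1⁻¹ ∉ H then f v else 0) = 0 := by
    rw [Fintype.sum_prod_type]
    have hcond : ∀ a b : G, (x * a⁻¹ = y * b⁻¹) ↔ (b = a * (x⁻¹ * y)) := by
      intro a b
      constructor
      · intro h
        have h2 : b * y⁻¹ = a * x⁻¹ := by
          have := congrArg (·⁻¹) h
          simpa [mul_inv_rev, eq_comm] using this
        rw [mul_inv_eq_iff_eq_mul] at h2
        rw [h2, mul_assoc]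
      · rintro rfl
        group
    have inner : ∀ a : G, (∑ b : G, if x * a⁻¹ = y * b⁻¹ ∧ x * a⁻¹ ∉ H then f (a, b) else 0)
        = (if x ∉ H then f (a, a * (x⁻¹ * y)) else 0) := by
      intro a
      have step1 : (∑ b : G, if x * a⁻¹ = y * b⁻¹ ∧ x * a⁻¹ ∉ H then f (a, b) else 0)
          = (if x * a⁻¹ ∉ H then f (a, a * (x⁻¹ * y)) else 0) := by
        have e : ∀ b : G, (if x * a⁻¹ = y * b⁻¹ ∧ x * a⁻¹ ∉ H then f (a, b) else 0)
            = (if b = a * (x⁻¹ * y) then (if x * a⁻¹ ∉ H then f (a, b) else 0) else 0) := by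
          intro b
          rw [if_congr (and_congr_left' (hcond a b)) rfl rfl]
          exact ite_and _ _ _ _
        rw [Finset.sum_congr rfl fun b _ => e b,
          Finset.sum_ite_eq' Finset.univ (a * (x⁻¹ * y))
            (fun b => if x * a⁻¹ ∉ H then f (a, b) else 0)]
        simp
      rw [step1]
      by_cases hx : x ∈ H <;> by_cases hxa : x * a⁻¹ ∈ H
      · simp [hx, hxa]
      · have ha : a ∉ H := fun ha => hxa (H.mul_mem hx (H.inv_mem ha))
        simp [hx, hxa, hsupp1 (a, a * (x⁻¹ * y)) ha]
      · have ha : a ∉ H := fun ha => hx (by simpa using H.mul_mem hxa ha)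
        simp [hx, hxa, hsupp1 (a, a * (x⁻¹ * y)) ha]
      · simp [hx, hxa]
    rw [Finset.sum_congr rfl fun a _ => inner a]
    by_cases hx : x ∉ H <;> simp [hx, hdiag (x⁻¹ * y)]
  rw [S1, S2, S3]; ring

lemma sum_ind_row (c d x : G) :
    ∑ y : G, (if (x, y) = (c, d) then (1 : ℂ) else 0) = if x = c then 1 else 0 := by
  by_cases hx : x = c
  · simp [Prod.ext_iff, hx]
  · simp [Prod.ext_iff, hx]

lemma sum_ind_col (c d y : G) :
    ∑ x : G, (if (x, y) = (c, d) then (1 : ℂ) else 0) = if y = d then 1 else 0 := by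
  by_cases hy : y = d
  · simp [Prod.ext_iff, hy]
  · simp [Prod.ext_iff, hy]

lemma sum_ind_diag (c p q : G) :
    ∑ h : G, (if (h, h * c) = (p, q) then (1 : ℂ) else 0) = if c = p⁻¹ * q then 1 else 0 := by
  have e : ∀ h : G, (if (h, h * c) = (p, q) then (1 : ℂ) else 0)
      = (if h = p then (if h * c = q then (1:ℂ) else 0) else 0) := by
    intro h
    rw [if_congr (show ((h, h * c) = (p, q)) ↔ (h = p ∧ h * c = q) from by
      simp [Prod.ext_iff]) rfl rfl]
    exact ite_and _ _ _ _
  rw [Finset.sum_congr rfl fun h _ => e h,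
    Finset.sum_ite_eq' Finset.univ p (fun h => if h * c = q then (1:ℂ) else 0)]
  simp only [Finset.mem_univ, if_pos]
  rw [if_congr (aux_iff p q c) rfl rfl]

/-- Case A construction: `H` contains an element of order `> 2`. -/
lemma caseA (b : G) (hbH : b ∈ H) (hbb : b * b ≠ 1) :
    ∃ f : G × G → ℂ, f ≠ 0 ∧ (∀ p : G × G, p.1 ∉ H → f p = 0) ∧
      (∀ p : G × G, p.2 ∉ H → f p = 0) ∧
      (∀ x : G, ∑ y : G, f (x, y) = 0) ∧ (∀ y : G, ∑ x : G, f (x, y) = 0) ∧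
      (∀ c : G, ∑ h : G, f (h, h * c) = 0) := by
  have hb1 : b ≠ 1 := by rintro rfl; simp at hbb
  refine ⟨fun p =>
    (if p = (1, 1) then 1 else 0) - (if p = (1, b) then 1 else 0)
    - (if p = (b * b, b * b) then 1 else 0) + (if p = (b * b, b) then 1 else 0)
    - (if p = (b, 1) then 1 else 0) + (if p = (b, b * b) then 1 else 0),
    ?_, ?_, ?_, ?_, ?_, ?_⟩
  · intro hf0
    have := congrFun hf0 (1, 1)
    have hb1' : (1 : G) ≠ b := Ne.symm hb1
    have hbb' : (1 : G) ≠ b * b := fun h => hbb h.symm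
    simp [Prod.ext_iff, hb1', hbb'] at this
  · intro p hp
    have hbbH : b * b ∈ H := H.mul_mem hbH hbH
    have h0 : p ≠ (1, 1) := by rintro rfl; exact hp H.one_mem
    have h1 : p ≠ (1, b) := by rintro rfl; exact hp H.one_mem
    have h2 : p ≠ (b * b, b * b) := by rintro rfl; exact hp hbbH
    have h3 : p ≠ (b * b, b) := by rintro rfl; exact hp hbbH
    have h4 : p ≠ (b, 1) := by rintro rfl; exact hp hbH
    have h5 : p ≠ (b, b * b) := by rintro rfl; exact hp hbH
    simp [h0, h1, h2, h3, h4, h5]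
  · intro p hp
    have hbbH : b * b ∈ H := H.mul_mem hbH hbH
    have h0 : p ≠ (1, 1) := by rintro rfl; exact hp H.one_mem
    have h1 : p ≠ (1, b) := by rintro rfl; exact hp hbH
    have h2 : p ≠ (b * b, b * b) := by rintro rfl; exact hp hbbH
    have h3 : p ≠ (b * b, b) := by rintro rfl; exact hp hbH
    have h4 : p ≠ (b, 1) := by rintro rfl; exact hp H.one_mem
    have h5 : p ≠ (b, b * b) := by rintro rfl; exact hp hbbH
    simp [h0, h1, h2, h3, h4, h5]
  · intro x
    simp only [Finset.sum_add_distrib, Finset.sum_sub_distrib, sum_ind_row]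
    ring
  · intro y
    simp only [Finset.sum_add_distrib, Finset.sum_sub_distrib, sum_ind_col]
    ring
  · intro c
    simp only [Finset.sum_add_distrib, Finset.sum_sub_distrib, sum_ind_diag]
    have n1 : (1 : G)⁻¹ * 1 = 1 := by simp
    have n2 : (1 : G)⁻¹ * b = b := by simp
    have n3 : (b * b)⁻¹ * (b * b) = 1 := inv_mul_cancel _
    have n4 : (b * b)⁻¹ * b = b⁻¹ := by
      rw [mul_inv_rev, mul_assoc, inv_mul_cancel, mul_one]
    have n5 : b⁻¹ * 1 = b⁻¹ := by simp
    have n6 : b⁻¹ * (b * b) = b := by simp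
    rw [n1, n2, n3, n4, n5, n6]
    ring

/-- Case B construction: two distinct commuting involutions in `H`. -/
lemma caseB (a b : G) (haH : a ∈ H) (hbH : b ∈ H) (ha1 : a ≠ 1) (hb1 : b ≠ 1)
    (hne : a ≠ b) (haa : a * a = 1) (hbb : b * b = 1) (hcomm : a * b = b * a) :
    ∃ f : G × G → ℂ, f ≠ 0 ∧ (∀ p : G × G, p.1 ∉ H → f p = 0) ∧
      (∀ p : G × G, p.2 ∉ H → f p = 0) ∧
      (∀ x : G, ∑ y : G, f (x, y) = 0) ∧ (∀ y : G, ∑ x : G, f (x, y) = 0) ∧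
      (∀ c : G, ∑ h : G, f (h, h * c) = 0) := by
  have ha_inv : a⁻¹ = a := inv_eq_of_mul_eq_one_right haa
  have hb_inv : b⁻¹ = b := inv_eq_of_mul_eq_one_right hbb
  have haa' : ∀ z : G, a * (a * z) = z := fun z => by rw [← mul_assoc, haa, one_mul]
  have hbb' : ∀ z : G, b * (b * z) = z := fun z => by rw [← mul_assoc, hbb, one_mul]
  have hcomm' : ∀ z : G, a * (b * z) = b * (a * z) := fun z => by
    rw [← mul_assoc, hcomm, mul_assoc]
  set χ : G → ℂ := fun x => (if x = 1 then 1 else 0) + (if x = a then 1 else 0)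
      - (if x = b then 1 else 0) - (if x = b * a then 1 else 0) with hχ
  set ψ : G → ℂ := fun y => (if y = 1 then 1 else 0) - (if y = a then 1 else 0)
      + (if y = b then 1 else 0) - (if y = b * a then 1 else 0) with hψ
  have hba1 : b * a ≠ 1 := fun h =>
    hne ((eq_inv_of_mul_eq_one_left h).trans ha_inv).symm
  have hχ0 : ∀ x : G, x ∉ H → χ x = 0 := by
    intro x hx
    have h0 : x ≠ 1 := by rintro rfl; exact hx H.one_mem
    have h1 : x ≠ a := by rintro rfl; exact hx haH
    have h2 : x ≠ b := by rintro rfl; exact hx hbH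
    have h3 : x ≠ b * a := by rintro rfl; exact hx (H.mul_mem hbH haH)
    simp [hχ, h0, h1, h2, h3]
  have hψ0 : ∀ y : G, y ∉ H → ψ y = 0 := by
    intro y hy
    have h0 : y ≠ 1 := by rintro rfl; exact hy H.one_mem
    have h1 : y ≠ a := by rintro rfl; exact hy haH
    have h2 : y ≠ b := by rintro rfl; exact hy hbH
    have h3 : y ≠ b * a := by rintro rfl; exact hy (H.mul_mem hbH haH)
    simp [hψ, h0, h1, h2, h3]
  have hχsum : ∑ x : G, χ x = 0 := by
    simp only [hχ, Finset.sum_add_distrib, Finset.sum_sub_distrib,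
      Finset.sum_ite_eq' Finset.univ, Finset.mem_univ, if_pos]
    ring
  have hψsum : ∑ y : G, ψ y = 0 := by
    simp only [hψ, Finset.sum_add_distrib, Finset.sum_sub_distrib,
      Finset.sum_ite_eq' Finset.univ, Finset.mem_univ, if_pos]
    ring
  refine ⟨fun p => χ p.1 * ψ p.2, ?_, ?_, ?_, ?_, ?_, ?_⟩
  · intro hf0
    have := congrFun hf0 (1, 1)
    have h1 : (1 : G) ≠ a := Ne.symm ha1
    have h2 : (1 : G) ≠ b := Ne.symm hb1
    have h3 : (1 : G) ≠ b * a := Ne.symm hba1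
    simp [hχ, hψ, h1, h2, h3] at this
  · exact fun p hp => by simp [hχ0 p.1 hp]
  · exact fun p hp => by simp [hψ0 p.2 hp]
  · intro x
    show ∑ y : G, χ x * ψ y = 0
    rw [← Finset.mul_sum, hψsum, mul_zero]
  · intro y
    show ∑ x : G, χ x * ψ y = 0
    rw [← Finset.sum_mul, hχsum, zero_mul]
  · intro c
    show ∑ h : G, χ h * ψ (h * c) = 0
    have expand : ∀ h : G, χ h * ψ (h * c) =
        (if h = 1 then ψ (h * c) else 0) + (if h = a then ψ (h * c) else 0)
        - (if h = b then ψ (h * c) else 0) - (if h = b * a then ψ (h * c) else 0) := by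
      intro h
      simp only [hχ, add_mul, sub_mul, ite_mul, one_mul, zero_mul]
    rw [Finset.sum_congr rfl fun h _ => expand h]
    simp only [Finset.sum_add_distrib, Finset.sum_sub_distrib,
      Finset.sum_ite_eq' Finset.univ, Finset.mem_univ, if_pos]
    simp only [hψ, one_mul]
    have r1 : ∀ w : G, (a * c = w) ↔ (c = a * w) := fun w => by
      rw [aux_iff, ha_inv]
    have r2 : ∀ w : G, (b * c = w) ↔ (c = b * w) := fun w => by
      rw [aux_iff, hb_inv]
    have r3 : ∀ w : G, (b * a * c = w) ↔ (c = a * (b * w)) := fun w => by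
      rw [aux_iff, mul_inv_rev, ha_inv, hb_inv, mul_assoc]
    simp only [if_congr (r1 _) rfl rfl, if_congr (r2 _) rfl rfl, if_congr (r3 _) rfl rfl]
    simp only [mul_one, haa, hbb, haa', hbb', hcomm', hcomm]
    ring

end Auxiliary

/-- If `H` is a proper subgroup of a finite group `G` with `|H| > 2`,
then `0` is an eigenvalue of the adjacency matrix of `Γ_H(G)`. -/
theorem zero_eigenvalue (G : Type*) [Group G] [Fintype G] (H : Subgroup G)
    (hH : H ≠ ⊤) (hcard : 2 < Nat.card H) :
    (((Gamma G H).adjMatrix ℂ).charpoly).IsRoot 0 := by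
  have hex : ∃ f : G × G → ℂ, f ≠ 0 ∧ (∀ p : G × G, p.1 ∉ H → f p = 0) ∧
      (∀ p : G × G, p.2 ∉ H → f p = 0) ∧
      (∀ x : G, ∑ y : G, f (x, y) = 0) ∧ (∀ y : G, ∑ x : G, f (x, y) = 0) ∧
      (∀ c : G, ∑ h : G, f (h, h * c) = 0) := by
    by_cases hA : ∃ g, g ∈ H ∧ g * g ≠ 1
    · obtain ⟨g, hgH, hgg⟩ := hA
      exact caseA g hgH hgg
    · push_neg at hA
      have hlt : 2 < Fintype.card H := by rw [← Nat.card_eq_fintype_card]; exact hcard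
      obtain ⟨x, hx⟩ := Fintype.exists_ne_of_one_lt_card (by omega : 1 < Fintype.card H) (1 : H)
      have hnsub : ¬ (Finset.univ : Finset H) ⊆ {1, x} := by
        intro hsub
        have h1 := Finset.card_le_card hsub
        have h2 : ({1, x} : Finset H).card ≤ 2 :=
          (Finset.card_insert_le _ _).trans (by simp)
        rw [Finset.card_univ] at h1
        omega
      obtain ⟨y, -, hy⟩ := Finset.not_subset.mp hnsub
      simp only [Finset.mem_insert, Finset.mem_singleton, not_or] at hy
      have ha1 : (x : G) ≠ 1 := fun h => hx (Subtype.ext h)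
      have hb1 : (y : G) ≠ 1 := fun h => hy.1 (Subtype.ext h)
      have hne : (x : G) ≠ (y : G) := fun h => hy.2 (Subtype.ext h.symm)
      have haa : (x : G) * x = 1 := hA x x.2
      have hbb : (y : G) * y = 1 := hA y y.2
      have hcomm : (x : G) * y = (y : G) * x := by
        have h4 : ((x : G) * y) * ((x : G) * y) = 1 := hA _ (H.mul_mem x.2 y.2)
        have h5 : (x : G) * y = ((x : G) * y)⁻¹ := eq_inv_of_mul_eq_one_left h4
        rw [mul_inv_rev, inv_eq_of_mul_eq_one_right haa,
          inv_eq_of_mul_eq_one_right hbb] at h5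
        exact h5
      exact caseB (x : G) (y : G) x.2 y.2 ha1 hb1 hne haa hbb hcomm
  obtain ⟨f, hf0, h1, h2, h3, h4, h5⟩ := hex
  have hker := kernel_lemma f h1 h2 h3 h4 h5
  have hdet : ((Gamma G H).adjMatrix ℂ).det = 0 :=
    Matrix.exists_mulVec_eq_zero_iff.mp ⟨f, hf0, hker⟩
  rw [Matrix.det_eq_sign_charpoly_coeff] at hdet
  have hc : (((Gamma G H).adjMatrix ℂ).charpoly).coeff 0 = 0 := by
    rcases mul_eq_zero.mp hdet with h | h
    · exact absurd h (pow_ne_zero _ (by norm_num))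
    · exact h
  show Polynomial.eval 0 (((Gamma G H).adjMatrix ℂ).charpoly) = 0
  rw [← Polynomial.coeff_zero_eq_eval_zero]
  exact hc
end
end

section
/- Let G be a finite group, H a subgroup of G, and (ρ, V), (φ, W) finite-dimensional complex irreducible representations of G. Let D = dim (V ⊗ W)^H, the dimension of the H-fixed subspace of the tensor product representation ρ ⊗ φ of G (acting diagonally: g ↦ ρ(g) ⊗ φ(g)). If ρ is isomorphic to the dual representation φ*, then the characteristic polynomial of Σ_{g ∈ G \ H} (ρ(g) ⊗ φ(g)) equals (X − (|G| − |H|)) · (X + |H|)^{D − 1} · X^{dim V · dim W − D}; if ρ is not isomorphic to φ*, it equals (X + |H|)^{D} · X^{dim V · dim W − D}. -/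
open Finset Polynomial Module
open scoped Classical

noncomputable section

/-- A representation is irreducible if the space is nonzero and the only `G`-invariant
subspaces are `⊥` and `⊤`. -/
def IsIrreducibleRep {G V : Type*} [Group G] [AddCommGroup V] [Module ℂ V]
    (ρ : Representation ℂ G V) : Prop :=
  Nontrivial V ∧ ∀ W : Submodule ℂ V, (∀ g : G, ∀ v ∈ W, ρ g v ∈ W) → W = ⊥ ∨ W = ⊤

/-- The `H`-fixed subspace `V^H` of a representation of `G`. -/
def fixedSubmodule {G V : Type*} [Group G] [AddCommGroup V] [Module ℂ V]
    (ρ : Representation ℂ G V) (H : Subgroup G) : Submodule ℂ V where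
  carrier := {v | ∀ h ∈ H, ρ h v = v}
  add_mem' := fun ha hb h hh => by simp [map_add, ha h hh, hb h hh]
  zero_mem' := fun h hh => by simp
  smul_mem' := fun c v hv h hh => by simp [map_smul, hv h hh]

/-- Two representations are isomorphic (equivalent) if there is an intertwining
linear equivalence. -/
def RepIso {G V W : Type*} [Group G] [AddCommGroup V] [Module ℂ V] [AddCommGroup W] [Module ℂ W]
    (ρ : Representation ℂ G V) (φ : Representation ℂ G W) : Prop :=
  ∃ T : V ≃ₗ[ℂ] W, ∀ (g : G) (v : V), T (ρ g v) = φ g (T v)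


lemma charpoly_diag {m : Type*} [Fintype m] [DecidableEq m] (d : m → ℂ) :
    (Matrix.diagonal d).charpoly = ∏ i, (X - C (d i)) := by
  rw [Matrix.charpoly]
  have h : (Matrix.diagonal d).charmatrix = Matrix.diagonal (fun i => X - C (d i)) := by
    ext i j
    by_cases hij : i = j
    · subst hij; rw [Matrix.charmatrix_apply_eq, Matrix.diagonal_apply_eq, Matrix.diagonal_apply_eq]
    · rw [Matrix.charmatrix_apply_ne _ _ _ hij, Matrix.diagonal_apply_ne _ hij,
        Matrix.diagonal_apply_ne _ hij, map_zero, neg_zero]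
  rw [h, Matrix.det_diagonal]

lemma charpoly_eigenbasis {U : Type*} [AddCommGroup U] [Module ℂ U] [FiniteDimensional ℂ U]
    {ι : Type*} [Fintype ι] [DecidableEq ι] (b : Basis ι ℂ U) (f : U →ₗ[ℂ] U) (μ : ι → ℂ)
    (h : ∀ i, f (b i) = μ i • b i) : f.charpoly = ∏ i, (X - C (μ i)) := by
  rw [← LinearMap.charpoly_toMatrix f b]
  have hm : LinearMap.toMatrix b b f = Matrix.diagonal μ := by
    ext i j
    rw [LinearMap.toMatrix_apply, h j, map_smul, b.repr_self]
    by_cases hij : i = j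
    · subst hij; simp
    · simp [Matrix.diagonal_apply_ne _ hij, Finsupp.single_apply, Ne.symm hij]
  rw [hm, charpoly_diag]


section Schur
variable {G A B : Type*} [Group G] [AddCommGroup A] [Module ℂ A] [AddCommGroup B] [Module ℂ B]

def intertwiners (π : Representation ℂ G A) (σ : Representation ℂ G B) :
    Submodule ℂ (A →ₗ[ℂ] B) where
  carrier := {T | ∀ g : G, T ∘ₗ (π g) = (σ g) ∘ₗ T}
  add_mem' := fun ha hb => by
    intro g; simp only [LinearMap.add_comp, LinearMap.comp_add, ha g, hb g]
  zero_mem' := by intro g; simp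
  smul_mem' := fun c T hT => by
    intro g; simp only [LinearMap.smul_comp, LinearMap.comp_smul, hT g]

lemma mem_intertwiners_iff {π : Representation ℂ G A} {σ : Representation ℂ G B}
    {T : A →ₗ[ℂ] B} : T ∈ intertwiners π σ ↔ ∀ (g : G) (v : A), T (π g v) = σ g (T v) := by
  constructor
  · intro h g v; exact LinearMap.congr_fun (h g) v
  · intro h g; ext v; exact h g v

lemma repIso_symm {π : Representation ℂ G A} {σ : Representation ℂ G B}
    (h : RepIso π σ) : RepIso σ π := by
  obtain ⟨T, hT⟩ := h
  refine ⟨T.symm, fun g w => T.injective ?_⟩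
  rw [T.apply_symm_apply, hT, T.apply_symm_apply]

lemma intertwiner_bijective (π : Representation ℂ G A) (σ : Representation ℂ G B)
    (hπ : IsIrreducibleRep π) (hσ : IsIrreducibleRep σ) {T : A →ₗ[ℂ] B}
    (hT : T ∈ intertwiners π σ) (hT0 : T ≠ 0) : Function.Bijective T := by
  rw [mem_intertwiners_iff] at hT
  have hker : LinearMap.ker T = ⊥ := by
    rcases hπ.2 (LinearMap.ker T) (fun g v hv => by
      rw [LinearMap.mem_ker] at hv ⊢; rw [hT g v, hv, map_zero]) with h | h
    · exact h
    · exact absurd (LinearMap.ker_eq_top.mp h) hT0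
  have hrange : LinearMap.range T = ⊤ := by
    rcases hσ.2 (LinearMap.range T) (fun g w hw => by
      obtain ⟨v, rfl⟩ := hw; exact ⟨π g v, hT g v⟩) with h | h
    · exact absurd (LinearMap.range_eq_bot.mp h) hT0
    · exact h
  exact ⟨LinearMap.ker_eq_bot.mp hker, LinearMap.range_eq_top.mp hrange⟩

lemma finrank_intertwiners [FiniteDimensional ℂ A] [FiniteDimensional ℂ B]
    (π : Representation ℂ G A) (σ : Representation ℂ G B)
    (hπ : IsIrreducibleRep π) (hσ : IsIrreducibleRep σ) :
    finrank ℂ (intertwiners π σ) = if RepIso π σ then 1 else 0 := by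
  split_ifs with hiso
  · obtain ⟨T0, hT0⟩ := hiso
    have hT0mem : (T0 : A →ₗ[ℂ] B) ∈ intertwiners π σ :=
      mem_intertwiners_iff.mpr fun g v => hT0 g v
    have hT0ne : (T0 : A →ₗ[ℂ] B) ≠ 0 := by
      have : Nontrivial A := hπ.1
      obtain ⟨a, ha⟩ := exists_ne (0 : A)
      intro h
      apply ha
      have h2 : T0 a = 0 := by simpa using LinearMap.congr_fun h a
      exact T0.map_eq_zero_iff.mp h2
    have hspan : intertwiners π σ = Submodule.span ℂ {(T0 : A →ₗ[ℂ] B)} := by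
      apply le_antisymm
      · intro T hT
        set E : Module.End ℂ A := (T0.symm : B →ₗ[ℂ] A) ∘ₗ T with hE
        have hTmem := mem_intertwiners_iff.mp hT
        have hsymm : ∀ (g : G) (w : B), T0.symm (σ g w) = π g (T0.symm w) := by
          intro g w
          apply T0.injective
          rw [T0.apply_symm_apply, hT0, T0.apply_symm_apply]
        have hEcomm : ∀ (g : G) (v : A), E (π g v) = π g (E v) := by
          intro g v
          simp only [hE, LinearMap.comp_apply, LinearEquiv.coe_coe, hTmem g v, hsymm]
        have : Nontrivial A := hπ.1
        obtain ⟨μ, hμ⟩ := Module.End.exists_eigenvalue E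
        have heig : Module.End.eigenspace E μ = ⊤ := by
          rcases hπ.2 (Module.End.eigenspace E μ) (fun g v hv => by
            rw [Module.End.mem_eigenspace_iff] at hv ⊢
            rw [hEcomm, hv, map_smul]) with h | h
          · exact absurd h hμ
          · exact h
        have hEv : ∀ v : A, E v = μ • v := fun v =>
          Module.End.mem_eigenspace_iff.mp (heig ▸ Submodule.mem_top)
        have hTμ : T = μ • (T0 : A →ₗ[ℂ] B) := by
          ext v
          have h3 := hEv v
          simp only [hE, LinearMap.comp_apply, LinearEquiv.coe_coe] at h3
          have h4 := congrArg T0 h3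
          rw [T0.apply_symm_apply, map_smul] at h4
          simpa using h4
        rw [hTμ]
        exact Submodule.smul_mem _ μ (Submodule.mem_span_singleton_self _)
      · rw [Submodule.span_singleton_le_iff_mem]; exact hT0mem
    rw [hspan, finrank_span_singleton hT0ne]
  · have hbot : intertwiners π σ = ⊥ := by
      rw [Submodule.eq_bot_iff]
      intro T hT
      by_contra hne
      have hbij := intertwiner_bijective π σ hπ hσ hT hne
      exact hiso ⟨LinearEquiv.ofBijective T hbij, fun g v => by
        simpa using (mem_intertwiners_iff.mp hT) g v⟩
    rw [hbot, finrank_bot]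

end Schur

lemma mem_fixedSubmodule {G V : Type*} [Group G] [AddCommGroup V] [Module ℂ V]
    {ρ : Representation ℂ G V} {H : Subgroup G} {v : V} :
    v ∈ fixedSubmodule ρ H ↔ ∀ h ∈ H, ρ h v = v := Iff.rfl

section DualIrr
variable {G W : Type*} [Group G] [AddCommGroup W] [Module ℂ W] [FiniteDimensional ℂ W]

lemma dual_irreducible {φ : Representation ℂ G W} (hφ : IsIrreducibleRep φ) :
    IsIrreducibleRep φ.dual := by
  have : Nontrivial W := hφ.1
  constructor
  · rw [← Module.finrank_pos_iff (R := ℂ), Subspace.dual_finrank_eq]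
    exact Module.finrank_pos
  · intro U hU
    have hco : ∀ g : G, ∀ w ∈ U.dualCoannihilator, φ g w ∈ U.dualCoannihilator := by
      intro g w hw
      rw [Submodule.mem_dualCoannihilator] at hw ⊢
      intro f hf
      have h1 : (φ.dual g⁻¹ f) w = 0 := hw _ (hU g⁻¹ f hf)
      simpa [Representation.dual_apply, Module.Dual.transpose_apply] using h1
    rcases hφ.2 U.dualCoannihilator (fun g w hw => hco g w hw) with h | h
    · right
      have hfr := Subspace.finrank_add_finrank_dualCoannihilator_eq U
      rw [h, finrank_bot, add_zero] at hfr
      exact Submodule.eq_top_of_finrank_eq (by rw [hfr, Subspace.dual_finrank_eq])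
    · left
      rw [Submodule.eq_bot_iff]
      intro f hf
      ext w
      have : w ∈ U.dualCoannihilator := h ▸ Submodule.mem_top
      rw [Submodule.mem_dualCoannihilator] at this
      simp [this f hf]

end DualIrr

section Tensor
variable {G V W : Type*} [Group G] [AddCommGroup V] [Module ℂ V] [FiniteDimensional ℂ V]
  [AddCommGroup W] [Module ℂ W] [FiniteDimensional ℂ W]

def tensorHomEquiv (V W : Type*) [AddCommGroup V] [Module ℂ V] [FiniteDimensional ℂ V]
    [AddCommGroup W] [Module ℂ W] [FiniteDimensional ℂ W] :
    TensorProduct ℂ V W ≃ₗ[ℂ] (Module.Dual ℂ W →ₗ[ℂ] V) :=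
  (TensorProduct.comm ℂ V W) ≪≫ₗ
    (TensorProduct.congr (Module.evalEquiv ℂ W) (LinearEquiv.refl ℂ V)) ≪≫ₗ
    dualTensorHomEquiv ℂ (Module.Dual ℂ W) V

lemma tensorHomEquiv_tmul (v : V) (w : W) (f : Module.Dual ℂ W) :
    tensorHomEquiv V W (v ⊗ₜ[ℂ] w) f = f w • v := by
  simp [tensorHomEquiv, dualTensorHomEquiv, Module.Dual.eval_apply]

lemma tensorHomEquiv_equivariant (ρ : Representation ℂ G V) (φ : Representation ℂ G W)
    (g : G) (u : TensorProduct ℂ V W) :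
    tensorHomEquiv V W ((ρ.tprod φ) g u) =
      (ρ g) ∘ₗ (tensorHomEquiv V W u) ∘ₗ (φ.dual g⁻¹) := by
  induction u using TensorProduct.induction_on with
  | zero => simp
  | tmul v w =>
    ext f
    simp only [Representation.tprod_apply, TensorProduct.map_tmul, LinearMap.comp_apply,
      tensorHomEquiv_tmul, Representation.dual_apply, map_smul]
    simp [Module.Dual.transpose_apply]
  | add x y hx hy => simp only [map_add, hx, hy, LinearMap.comp_add, LinearMap.add_comp]

lemma map_fixed_top_eq (ρ : Representation ℂ G V) (φ : Representation ℂ G W) :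
    (fixedSubmodule (ρ.tprod φ) ⊤).map (tensorHomEquiv V W).toLinearMap =
      intertwiners φ.dual ρ := by
  have hgg : ∀ (g : G) (f : Module.Dual ℂ W), φ.dual g⁻¹ (φ.dual g f) = f := by
    intro g f
    rw [show φ.dual g⁻¹ (φ.dual g f) = (φ.dual g⁻¹ * φ.dual g) f from rfl, ← map_mul,
      inv_mul_cancel, map_one]
    rfl
  have hgg' : ∀ (g : G) (f : Module.Dual ℂ W), φ.dual g (φ.dual g⁻¹ f) = f := by
    intro g f
    rw [show φ.dual g (φ.dual g⁻¹ f) = (φ.dual g * φ.dual g⁻¹) f from rfl, ← map_mul,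
      mul_inv_cancel, map_one]
    rfl
  ext T
  simp only [Submodule.mem_map]
  constructor
  · rintro ⟨u, hu, rfl⟩
    intro g
    have h1 : (ρ.tprod φ) g u = u := mem_fixedSubmodule.mp hu g (Subgroup.mem_top g)
    have h2 := tensorHomEquiv_equivariant ρ φ g u
    rw [h1] at h2
    ext f
    have h3 := LinearMap.congr_fun h2 (φ.dual g f)
    simp only [LinearMap.comp_apply, LinearEquiv.coe_coe] at h3 ⊢
    rw [h3, hgg]
  · intro hT
    refine ⟨(tensorHomEquiv V W).symm T, ?_, by simp⟩
    rw [mem_fixedSubmodule]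
    intro g _
    apply (tensorHomEquiv V W).injective
    rw [tensorHomEquiv_equivariant, LinearEquiv.apply_symm_apply]
    ext f
    have h3 := LinearMap.congr_fun (hT g) (φ.dual g⁻¹ f)
    simp only [LinearMap.comp_apply] at h3 ⊢
    rw [← h3, hgg']

lemma finrank_fixed_top (ρ : Representation ℂ G V) (φ : Representation ℂ G W)
    (hρ : IsIrreducibleRep ρ) (hφ : IsIrreducibleRep φ) :
    finrank ℂ (fixedSubmodule (ρ.tprod φ) ⊤) = if RepIso ρ φ.dual then 1 else 0 := by
  have h1 := LinearEquiv.finrank_map_eq (tensorHomEquiv V W) (fixedSubmodule (ρ.tprod φ) ⊤)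
  rw [map_fixed_top_eq ρ φ] at h1
  rw [← h1, finrank_intertwiners φ.dual ρ (dual_irreducible hφ) hρ]
  by_cases h : RepIso ρ φ.dual
  · rw [if_pos (repIso_symm h), if_pos h]
  · rw [if_neg (fun hh => h (repIso_symm hh)), if_neg h]

end Tensor

section Master
variable {G U : Type*} [Group G] [Fintype G] [AddCommGroup U] [Module ℂ U]
  [FiniteDimensional ℂ U]

lemma master (π : Representation ℂ G U) (H : Subgroup G) :
    (∑ g ∈ Finset.univ.filter (fun g => g ∉ H), π g : U →ₗ[ℂ] U).charpoly =
      (X - C ((Fintype.card G : ℂ) - (Nat.card H : ℂ))) ^ (finrank ℂ (fixedSubmodule π ⊤)) *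
        (X + C ((Nat.card H : ℂ))) ^
          (finrank ℂ (fixedSubmodule π H) - finrank ℂ (fixedSubmodule π ⊤)) *
        X ^ (finrank ℂ U - finrank ℂ (fixedSubmodule π H)) := by
  classical
  have hcardH : (Finset.univ.filter (fun g : G => g ∈ H)).card = Nat.card H := by
    rw [Nat.card_eq_fintype_card]
    exact (Fintype.card_subtype (fun g : G => g ∈ H)).symm
  have hcardle : Nat.card H ≤ Fintype.card G := by
    rw [← hcardH]
    exact Finset.card_le_card (Finset.subset_univ _) |>.trans (le_of_eq (Finset.card_univ))
  have ha0 : (Fintype.card G : ℂ) ≠ 0 := by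
    simp [Fintype.card_ne_zero]
  have hc0 : ((Nat.card H : ℕ) : ℂ) ≠ 0 := by
    simp [Nat.card_pos.ne']
  by_cases hH : H = ⊤
  · subst hH
    have hd : finrank ℂ (fixedSubmodule π (⊤ : Subgroup G)) ≤ finrank ℂ U :=
      Submodule.finrank_le _
    have hM0 : (∑ g ∈ Finset.univ.filter (fun g => g ∉ (⊤ : Subgroup G)), π g : U →ₗ[ℂ] U)
        = 0 := by
      rw [Finset.filter_false_of_mem, Finset.sum_empty]
      intro g _
      simp
    have hac : (Fintype.card G : ℂ) - (Nat.card (⊤ : Subgroup G) : ℂ) = 0 := by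
      rw [Subgroup.card_top, Nat.card_eq_fintype_card, sub_self]
    have h0 : (0 : U →ₗ[ℂ] U).charpoly = X ^ (finrank ℂ U) := by
      have h := charpoly_eigenbasis (finBasis ℂ U) 0 (fun _ => (0 : ℂ)) (by simp)
      rw [h]
      simp only [map_zero, sub_zero]
      rw [Finset.prod_const, Finset.card_univ, Fintype.card_fin]
    rw [hM0, h0, hac, map_zero, sub_zero, Nat.sub_self, pow_zero, mul_one, ← pow_add]
    congr 1
    omega
  -- main case : H ≠ ⊤
  have hcardlt : Nat.card H < Fintype.card G := by
    rcases lt_or_eq_of_le hcardle with h | h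
    · exact h
    · exact absurd (Subgroup.eq_top_of_card_eq H (by rw [h, Nat.card_eq_fintype_card])) hH
  set a : ℂ := (Fintype.card G : ℂ) with haa
  set c : ℂ := ((Nat.card H : ℕ) : ℂ) with hcc
  have he0 : a - c ≠ 0 := by
    rw [sub_ne_zero, haa, hcc]
    exact_mod_cast hcardlt.ne'
  set T : Module.End ℂ U := ∑ g : G, π g with hT
  set S : Module.End ℂ U := ∑ g ∈ Finset.univ.filter (fun g : G => g ∈ H), π g with hS
  set M : Module.End ℂ U := ∑ g ∈ Finset.univ.filter (fun g : G => g ∉ H), π g with hMdef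
  have hsplit : S + M = T := by
    rw [hT, hS, hMdef]
    exact Finset.sum_filter_add_sum_filter_not Finset.univ (fun g => g ∈ H)
      (fun g => (π g : Module.End ℂ U))
  have hM : M = T - S := by rw [← hsplit]; abel
  have hAT : ∀ g : G, (π g : Module.End ℂ U) * T = T := by
    intro g
    rw [hT, Finset.mul_sum]
    exact Fintype.sum_equiv (Equiv.mulLeft g) _ _ (fun x => by
      simp [Equiv.coe_mulLeft, ← map_mul])
  have hTA : ∀ g : G, T * (π g : Module.End ℂ U) = T := by
    intro g
    rw [hT, Finset.sum_mul]
    exact Fintype.sum_equiv (Equiv.mulRight g) _ _ (fun x => by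
      simp [Equiv.coe_mulRight, ← map_mul])
  have hAS : ∀ h ∈ H, (π h : Module.End ℂ U) * S = S := by
    intro h hh
    rw [hS, Finset.mul_sum]
    refine Finset.sum_equiv (Equiv.mulLeft h) (fun x => ?_) (fun x _ => ?_)
    · simp [Finset.mem_filter, Equiv.coe_mulLeft, mul_mem_cancel_left hh]
    · simp [Equiv.coe_mulLeft, ← map_mul]
  have hTT : T * T = a • T := by
    nth_rewrite 1 [hT]
    rw [Finset.sum_mul]
    rw [Finset.sum_congr rfl (fun g _ => hAT g), Finset.sum_const, Finset.card_univ,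
      ← Nat.cast_smul_eq_nsmul ℂ, ← haa]
  have hST : S * T = c • T := by
    nth_rewrite 1 [hS]
    rw [Finset.sum_mul]
    rw [Finset.sum_congr rfl (fun g _ => hAT g), Finset.sum_const, hcardH,
      ← Nat.cast_smul_eq_nsmul ℂ, ← hcc]
  have hTS : T * S = c • T := by
    nth_rewrite 1 [hS]
    rw [Finset.mul_sum]
    rw [Finset.sum_congr rfl (fun g _ => hTA g), Finset.sum_const, hcardH,
      ← Nat.cast_smul_eq_nsmul ℂ, ← hcc]
  have hSS : S * S = c • S := by
    nth_rewrite 1 [hS]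
    rw [Finset.sum_mul]
    rw [Finset.sum_congr rfl (fun g hg => hAS g (Finset.mem_filter.mp hg).2),
      Finset.sum_const, hcardH, ← Nat.cast_smul_eq_nsmul ℂ, ← hcc]
  have hKey : M * M + c • M = (a - c) • T := by
    rw [hM, sub_mul, mul_sub, mul_sub, hTT, hTS, hST, hSS, smul_sub]
    module
  set μ : Fin 3 → ℂ := ![0, -c, a - c] with hμdef
  have hμ0 : μ 0 = 0 := rfl
  have hμ1 : μ 1 = -c := rfl
  have hμ2 : μ 2 = a - c := rfl
  have hμinj : Function.Injective μ := by
    have h01 : ¬ ((0:ℂ) = -c) := fun h => hc0 (by linear_combination h)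
    have h02 : ¬ ((0:ℂ) = a - c) := fun h => he0 (by linear_combination -h)
    have h12 : ¬ ((-c:ℂ) = a - c) := fun h => ha0 (by linear_combination -h)
    intro i j hij
    fin_cases i <;> fin_cases j <;>
      first
      | rfl
      | exact absurd hij h01
      | exact absurd hij h02
      | exact absurd hij h12
      | exact absurd hij.symm h01
      | exact absurd hij.symm h02
      | exact absurd hij.symm h12
  set K : Fin 3 → Submodule ℂ U := fun i => Module.End.eigenspace M (μ i) with hKdef
  have hmemK : ∀ (i : Fin 3) (v : U), v ∈ K i ↔ M v = μ i • v := by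
    intro i v
    rw [hKdef]
    exact Module.End.mem_eigenspace_iff
  have hMTv : ∀ v : U, M (T v) = (a - c) • T v := by
    intro v
    simpa using LinearMap.congr_fun (show M * T = (a - c) • T by
      rw [hM, sub_mul, hTT, hST, ← sub_smul]) v
  have hTMv : ∀ v : U, T (M v) = (a - c) • T v := by
    intro v
    simpa using LinearMap.congr_fun (show T * M = (a - c) • T by
      rw [hM, mul_sub, hTT, hTS, ← sub_smul]) v
  have hMSv : ∀ v : U, M (S v) = c • T v - c • S v := by
    intro v
    simpa using LinearMap.congr_fun (show M * S = c • T - c • S by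
      rw [hM, sub_mul, hTS, hSS]) v
  have hMv : ∀ v : U, M v = T v - S v := by
    intro v
    simpa using LinearMap.congr_fun hM v
  have hTTv : ∀ v : U, T (T v) = a • T v := by
    intro v
    simpa using LinearMap.congr_fun hTT v
  have hATv : ∀ (g : G) (v : U), π g (T v) = T v := by
    intro g v
    simpa using LinearMap.congr_fun (hAT g) v
  have hASv : ∀ h ∈ H, ∀ v : U, π h (S v) = S v := by
    intro h hh v
    simpa using LinearMap.congr_fun (hAS h hh) v
  have hsup : (⨆ i, K i) = ⊤ := by
    rw [eq_top_iff]
    rintro v -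
    have h2 : a⁻¹ • T v ∈ K 2 := by
      rw [hmemK, hμ2, map_smul, hMTv, smul_comm]
    have h1 : c⁻¹ • S v - a⁻¹ • T v ∈ K 1 := by
      rw [hmemK, hμ1, map_sub, map_smul, map_smul, hMTv, hMSv]
      match_scalars <;> (field_simp; try ring)
    have h0 : v - c⁻¹ • S v ∈ K 0 := by
      rw [hmemK, hμ0, map_sub, map_smul, hMv, hMSv]
      match_scalars <;> (field_simp; try ring)
    have hdecomp : v = (v - c⁻¹ • S v) + (c⁻¹ • S v - a⁻¹ • T v) + a⁻¹ • T v := by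
      module
    rw [hdecomp]
    exact add_mem (add_mem (Submodule.mem_iSup_of_mem 0 h0)
      (Submodule.mem_iSup_of_mem 1 h1)) (Submodule.mem_iSup_of_mem 2 h2)
  have hind : iSupIndep K := (Module.End.eigenspaces_iSupIndep M).comp hμinj
  have hinternal : DirectSum.IsInternal K :=
    DirectSum.isInternal_submodule_of_iSupIndep_of_iSup_eq_top hind hsup
  set B := hinternal.collectedBasis (fun i => finBasis ℂ (K i)) with hBdef
  have hchar : M.charpoly = ∏ s : (Σ i : Fin 3, Fin (finrank ℂ (K i))), (X - C (μ s.1)) := by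
    refine charpoly_eigenbasis B M (fun s => μ s.1) (fun s => ?_)
    exact (hmemK s.1 (B s)).mp (hinternal.collectedBasis_mem _ s)
  have hprod : (∏ s : (Σ i : Fin 3, Fin (finrank ℂ (K i))), (X - C (μ s.1))) =
      ∏ i : Fin 3, (X - C (μ i)) ^ (finrank ℂ (K i)) := by
    rw [← Finset.univ_sigma_univ]
    rw [Finset.prod_sigma Finset.univ (fun _ => Finset.univ) (fun s => X - C (μ s.1))]
    refine Finset.prod_congr rfl fun i _ => ?_
    show ∏ _j ∈ Finset.univ, (X - C (μ i)) = _
    rw [Finset.prod_const, Finset.card_univ, Fintype.card_fin]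
  -- identification of eigenspaces
  have hK2 : K 2 = fixedSubmodule π ⊤ := by
    ext v
    rw [hmemK, hμ2, mem_fixedSubmodule]
    constructor
    · intro hv
      have h5 : M (M v) + c • M v = (a - c) • T v := by
        simpa using LinearMap.congr_fun hKey v
      rw [hv, map_smul, hv] at h5
      have hTv : T v = a • v := by
        have h6 : (a - c) • T v = (a - c) • (a • v) := by
          rw [← h5]
          match_scalars
          ring
        exact smul_right_injective U he0 h6
      intro g _
      have h8 : v = a⁻¹ • T v := by
        rw [hTv]
        match_scalars
        field_simp
      rw [h8, map_smul, hATv]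
    · intro hv
      have h9 : M v = ∑ g ∈ Finset.univ.filter (fun g : G => g ∉ H), π g v := by
        rw [hMdef]
        exact LinearMap.sum_apply _ _ v
      have hcard2 : (Finset.univ.filter (fun g : G => g ∉ H)).card =
          Fintype.card G - Nat.card H := by
        have h10 := Finset.card_filter_add_card_filter_not
          (s := Finset.univ) (p := fun g : G => g ∈ H)
        rw [Finset.card_univ] at h10
        omega
      rw [h9, Finset.sum_congr rfl (fun g _ => hv g (Subgroup.mem_top g)),
        Finset.sum_const, hcard2, ← Nat.cast_smul_eq_nsmul ℂ,
        Nat.cast_sub hcardle, ← haa, ← hcc]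
  have hK1 : K 1 = fixedSubmodule π H ⊓ LinearMap.ker T := by
    ext v
    rw [hmemK, hμ1, Submodule.mem_inf, mem_fixedSubmodule, LinearMap.mem_ker]
    constructor
    · intro hv
      have hTv0 : T v = 0 := by
        have h5 := hTMv v
        rw [hv, map_smul] at h5
        have h6 : a • T v = 0 := by
          have h7 : (a - c) • T v - (-c) • T v = 0 := by rw [← h5]; abel
          rw [← sub_smul] at h7
          simpa using h7
        exact (smul_eq_zero.mp h6).resolve_left ha0 |>.symm ▸ rfl
      have hSv : S v = c • v := by
        have h7 := hMv v
        rw [hv, hTv0, zero_sub, neg_smul] at h7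
        exact (neg_injective h7).symm
      refine ⟨fun h hh => ?_, hTv0⟩
      have h9 : v = c⁻¹ • S v := by
        rw [hSv]
        match_scalars
        field_simp
      rw [h9, map_smul, hASv h hh]
    · rintro ⟨hfix, hker⟩
      have hSv : S v = c • v := by
        rw [hS, LinearMap.sum_apply,
          Finset.sum_congr rfl (fun h hh => hfix h (Finset.mem_filter.mp hh).2),
          Finset.sum_const, hcardH, ← Nat.cast_smul_eq_nsmul ℂ, ← hcc]
      rw [hMv, hSv, hker, zero_sub, neg_smul]
  -- dimension bookkeeping
  have hle : fixedSubmodule π ⊤ ≤ fixedSubmodule π H := by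
    intro v hv
    rw [mem_fixedSubmodule] at hv ⊢
    exact fun h _ => hv h (Subgroup.mem_top h)
  have hTfix : ∀ v ∈ fixedSubmodule π ⊤, T v = a • v := by
    intro v hv
    rw [hT, LinearMap.sum_apply,
      Finset.sum_congr rfl (fun g _ => mem_fixedSubmodule.mp hv g (Subgroup.mem_top g)),
      Finset.sum_const, Finset.card_univ, ← Nat.cast_smul_eq_nsmul ℂ, ← haa]
  have hsupFH : fixedSubmodule π ⊤ ⊔ (fixedSubmodule π H ⊓ LinearMap.ker T) =
      fixedSubmodule π H := by
    apply le_antisymm (sup_le hle inf_le_left)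
    intro v hv
    have hx : a⁻¹ • T v ∈ fixedSubmodule π ⊤ := by
      rw [mem_fixedSubmodule]
      intro g _
      rw [map_smul, hATv]
    have hy : v - a⁻¹ • T v ∈ fixedSubmodule π H ⊓ LinearMap.ker T := by
      rw [Submodule.mem_inf]
      refine ⟨sub_mem hv (hle hx), LinearMap.mem_ker.mpr ?_⟩
      rw [map_sub, map_smul, hTTv]
      match_scalars
      field_simp
      norm_num
    have hdecomp : v = a⁻¹ • T v + (v - a⁻¹ • T v) := by module
    rw [hdecomp]
    exact add_mem (Submodule.mem_sup_left hx) (Submodule.mem_sup_right hy)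
  have hinfFH : fixedSubmodule π ⊤ ⊓ (fixedSubmodule π H ⊓ LinearMap.ker T) = ⊥ := by
    rw [eq_bot_iff]
    intro v hv
    rw [Submodule.mem_inf, Submodule.mem_inf, LinearMap.mem_ker] at hv
    obtain ⟨hv1, -, hv3⟩ := hv
    have := hTfix v hv1
    rw [hv3] at this
    have hv0 : v = 0 := by
      rcases smul_eq_zero.mp this.symm with h | h
      · exact absurd h ha0
      · exact h
    simp [hv0]
  have hrank := Submodule.finrank_sup_add_finrank_inf_eq (fixedSubmodule π ⊤)
    (fixedSubmodule π H ⊓ LinearMap.ker T)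
  rw [hsupFH, hinfFH, finrank_bot, add_zero] at hrank
  have hr2 : finrank ℂ (K 2) = finrank ℂ (fixedSubmodule π ⊤) := by rw [hK2]
  have hr1' : finrank ℂ (K 1) = finrank ℂ ↥(fixedSubmodule π H ⊓ LinearMap.ker T) := by
    rw [hK1]
  have hr1 : finrank ℂ (K 1) =
      finrank ℂ (fixedSubmodule π H) - finrank ℂ (fixedSubmodule π ⊤) := by omega
  have hn : finrank ℂ U = finrank ℂ (K 0) + finrank ℂ (K 1) + finrank ℂ (K 2) := by
    rw [Module.finrank_eq_card_basis B, Fintype.card_sigma]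
    simp [Fin.sum_univ_three]
  have hDn : finrank ℂ (fixedSubmodule π H) ≤ finrank ℂ U := Submodule.finrank_le _
  have hr0 : finrank ℂ (K 0) =
      finrank ℂ U - finrank ℂ (fixedSubmodule π H) := by omega
  show M.charpoly = _
  rw [hchar, hprod, Fin.prod_univ_three, hμ0, hμ1, hμ2, map_zero, sub_zero, map_neg,
    sub_neg_eq_add, hr0, hr1, hr2]
  ring

end Master

/-- Let `H ≤ G` be finite groups, `(ρ, V)`, `(φ, W)` irreducible complex
representations of `G`, and `D = dim (V ⊗ W)^H` for the (diagonal) tensor product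
representation. If `ρ ≅ φ*` then the characteristic polynomial of `Σ_{g ∈ G \ H} ρ(g) ⊗ φ(g)`
is `(X - (|G|-|H|))·(X + |H|)^(D-1)·X^(dim V · dim W - D)`; if `ρ ≇ φ*` it is
`(X + |H|)^D · X^(dim V · dim W - D)`. -/
theorem charpoly_tensor_sum_over_complement (G V W : Type*) [Group G] [Fintype G]
    [AddCommGroup V] [Module ℂ V] [FiniteDimensional ℂ V]
    [AddCommGroup W] [Module ℂ W] [FiniteDimensional ℂ W]
    (H : Subgroup G) (ρ : Representation ℂ G V) (φ : Representation ℂ G W)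
    (hρ : IsIrreducibleRep ρ) (hφ : IsIrreducibleRep φ) :
    (RepIso ρ φ.dual →
      (∑ g ∈ Finset.univ.filter (fun g => g ∉ H), (ρ.tprod φ) g :
          TensorProduct ℂ V W →ₗ[ℂ] TensorProduct ℂ V W).charpoly =
        (X - C ((Fintype.card G : ℂ) - (Nat.card H : ℂ))) *
          (X + C ((Nat.card H : ℂ))) ^ (finrank ℂ (fixedSubmodule (ρ.tprod φ) H) - 1) *
          X ^ (finrank ℂ V * finrank ℂ W - finrank ℂ (fixedSubmodule (ρ.tprod φ) H))) ∧
    (¬ RepIso ρ φ.dual →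
      (∑ g ∈ Finset.univ.filter (fun g => g ∉ H), (ρ.tprod φ) g :
          TensorProduct ℂ V W →ₗ[ℂ] TensorProduct ℂ V W).charpoly =
        (X + C ((Nat.card H : ℂ))) ^ (finrank ℂ (fixedSubmodule (ρ.tprod φ) H)) *
          X ^ (finrank ℂ V * finrank ℂ W - finrank ℂ (fixedSubmodule (ρ.tprod φ) H))) := by
  have hmaster := master (ρ.tprod φ) H
  have hfix := finrank_fixed_top ρ φ hρ hφ
  have hn : finrank ℂ V * finrank ℂ W = finrank ℂ (TensorProduct ℂ V W) :=
    (Module.finrank_tensorProduct).symm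
  constructor
  · intro hiso
    rw [hmaster, hfix, if_pos hiso, pow_one, hn]
  · intro hiso
    rw [hmaster, hfix, if_neg hiso, pow_zero, one_mul, Nat.sub_zero, hn]
end
end
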